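/- arXiv:1502.03158 — 8 statements merged into one kernel-verified Lean document; each statement's English description precedes it below -/
import Mathlib

section
/- Let M₀ be an n×n real symmetric positive definite matrix, let ε ≥ 0, and let Z₀ be an n×n real symmetric positive semidefinite matrix with Z₀ ≈_ε M₀⁻¹. For b₀ ∈ ℝⁿ let x⋆ = M₀⁻¹ b₀ be the solution of M₀x = b₀ and let x̃ = Z₀ b₀. Then ‖x⋆ − x̃‖_{M₀} ≤ √(2·e^ε·(e^ε − 1)) · ‖x⋆‖_{M₀}. -/
open Matrix

/-- Loewner order: `P ⪯ Q` iff `Q - P` is positive semidefinite. -/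
def LoewnerLE {n : ℕ} (P Q : Matrix (Fin n) (Fin n) ℝ) : Prop :=
  (Q - P).PosSemidef

/-- `X ≈_α Y` iff `e^(−α)·X ⪯ Y ⪯ e^(α)·X` in the Loewner order. -/
def ApproxA {n : ℕ} (α : ℝ) (X Y : Matrix (Fin n) (Fin n) ℝ) : Prop :=
  LoewnerLE (Real.exp (-α) • X) Y ∧ LoewnerLE Y (Real.exp α • X)

/-- The `M`-norm of a vector `u`: `‖u‖_M = √(uᵀ M u)`. -/
noncomputable def Mnorm {n : ℕ} (M : Matrix (Fin n) (Fin n) ℝ) (u : Fin n → ℝ) : ℝ :=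
  Real.sqrt (u ⬝ᵥ M *ᵥ u)

lemma psd_smul_aux {n : ℕ} {P : Matrix (Fin n) (Fin n) ℝ} (hP : P.PosSemidef) {c : ℝ}
    (hc : 0 ≤ c) : (c • P).PosSemidef := by
  refine ⟨?_, fun x => ?_⟩
  · rw [Matrix.IsHermitian, conjTranspose_smul, hP.1]; simp
  · exact (hP.smul hc).2 x

lemma psd_apply_aux {n : ℕ} {P : Matrix (Fin n) (Fin n) ℝ} (hP : P.PosSemidef)
    (x : Fin n → ℝ) : 0 ≤ x ⬝ᵥ P *ᵥ x := by simpa using hP.dotProduct_mulVec_nonneg x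

open scoped MatrixOrder in
lemma psd_sqrt_port {n : ℕ} {P : Matrix (Fin n) (Fin n) ℝ} (hP : P.PosSemidef) :
    ∃ A : Matrix (Fin n) (Fin n) ℝ, A * A = P ∧ A.PosSemidef :=
  ⟨CFC.sqrt P, CFC.sqrt_mul_sqrt_self P hP.nonneg, (CFC.sqrt_nonneg P).posSemidef⟩

lemma dot_mulVec_symm {n : ℕ} {S : Matrix (Fin n) (Fin n) ℝ} (hS : Sᵀ = S) (x y : Fin n → ℝ) :
    (S *ᵥ x) ⬝ᵥ y = x ⬝ᵥ S *ᵥ y := by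
  rw [dotProduct_comm, dotProduct_mulVec, ← mulVec_transpose, hS, dotProduct_comm]

set_option maxHeartbeats 1000000 in
theorem stmt_5 {n : ℕ} (M₀ Z₀ : Matrix (Fin n) (Fin n) ℝ)
    (hM : M₀.PosDef) (ε : ℝ) (hε : 0 ≤ ε) (hZ : Z₀.PosSemidef)
    (hZM : ApproxA ε Z₀ M₀⁻¹)
    (b₀ : Fin n → ℝ) (xstar xtilde : Fin n → ℝ)
    (hxstar : xstar = M₀⁻¹ *ᵥ b₀) (hxtilde : xtilde = Z₀ *ᵥ b₀) :
    Mnorm M₀ (xstar - xtilde) ≤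
      Real.sqrt (2 * Real.exp ε * (Real.exp ε - 1)) * Mnorm M₀ xstar := by
  have hMps := hM.posSemidef
  obtain ⟨A, hAA, hApsd⟩ : ∃ A : Matrix (Fin n) (Fin n) ℝ, A * A = M₀ ∧ A.PosSemidef :=
    psd_sqrt_port hMps
  have hAT : Aᵀ = A := (by simpa using hApsd.isHermitian : A.IsSymm)
  have hAH : Aᴴ = A := hApsd.isHermitian
  have hdetM : IsUnit M₀.det := isUnit_iff_ne_zero.mpr (ne_of_gt hM.det_pos)
  have hdetA : IsUnit A.det := by
    have h2 : A.det * A.det = M₀.det := by rw [← det_mul, hAA]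
    refine isUnit_iff_ne_zero.mpr fun h => ?_
    rw [h, mul_zero] at h2
    exact (ne_of_gt hM.det_pos) h2.symm
  have hMinv : A * M₀⁻¹ * A = 1 := by
    rw [← hAA, Matrix.mul_inv_rev, ← Matrix.mul_assoc,
      Matrix.mul_assoc A A⁻¹ A⁻¹, ← Matrix.mul_assoc A A⁻¹,
      Matrix.mul_nonsing_inv A hdetA, Matrix.one_mul, Matrix.nonsing_inv_mul A hdetA]
  set S := A * Z₀ * A with hSdef
  have hSpsd : S.PosSemidef := by
    have := hZ.mul_mul_conjTranspose_same A
    rwa [hAH] at this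
  have hST : Sᵀ = S := (by simpa using hSpsd.isHermitian : S.IsSymm)
  set E := Real.exp ε with hEdef
  have hE1 : 1 ≤ E := Real.one_le_exp hε
  have hE0 : 0 < E := Real.exp_pos ε
  -- conjugated Loewner bounds
  have hS1 : (E • S - 1).PosSemidef := by
    have h := (hZM.2).mul_mul_conjTranspose_same A
    rw [hAH] at h
    have heq : A * (E • Z₀ - M₀⁻¹) * A = E • S - 1 := by
      rw [Matrix.mul_sub, Matrix.sub_mul, hMinv]
      congr 1
      rw [Matrix.mul_smul, Matrix.smul_mul]
    rwa [heq] at h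
  have hS2 : ((1 : Matrix (Fin n) (Fin n) ℝ) - Real.exp (-ε) • S).PosSemidef := by
    have h := (hZM.1).mul_mul_conjTranspose_same A
    rw [hAH] at h
    have heq : A * (M₀⁻¹ - Real.exp (-ε) • Z₀) * A = 1 - Real.exp (-ε) • S := by
      rw [Matrix.mul_sub, Matrix.sub_mul, hMinv]
      congr 1
      rw [Matrix.mul_smul, Matrix.smul_mul]
    rwa [heq] at h
  -- S ⪯ E • 1
  have hSle : (E • (1 : Matrix (Fin n) (Fin n) ℝ) - S).PosSemidef := by
    have h := psd_smul_aux hS2 (le_of_lt hE0)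
    have heq : E • ((1 : Matrix (Fin n) (Fin n) ℝ) - Real.exp (-ε) • S)
        = E • (1 : Matrix (Fin n) (Fin n) ℝ) - S := by
      rw [smul_sub, smul_smul, hEdef, ← Real.exp_add]
      simp
    rwa [heq] at h
  -- conjugate by sqrt S :  S*S ⪯ E • S
  obtain ⟨T, hTT, hTH⟩ : ∃ T : Matrix (Fin n) (Fin n) ℝ, T * T = S ∧ Tᴴ = T :=
    (psd_sqrt_port hSpsd).imp fun _ h => ⟨h.1, h.2.isHermitian⟩
  have hS3 : (E • S - S * S).PosSemidef := by
    have h := hSle.mul_mul_conjTranspose_same T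
    rw [hTH] at h
    have heq : T * (E • (1 : Matrix (Fin n) (Fin n) ℝ) - S) * T = E • S - S * S := by
      rw [Matrix.mul_sub, Matrix.sub_mul, Matrix.mul_smul, Matrix.mul_one, Matrix.smul_mul,
        hTT, ← hTT]
      congr 1
      simp only [Matrix.mul_assoc]
    rwa [heq] at h
  -- vectors
  set w := A *ᵥ xstar with hwdef
  have hb : M₀ *ᵥ xstar = b₀ := by
    rw [hxstar, mulVec_mulVec, Matrix.mul_nonsing_inv M₀ hdetM, one_mulVec]
  have hAe : A *ᵥ (xstar - xtilde) = w - S *ᵥ w := by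
    have : A *ᵥ xtilde = S *ᵥ w := by
      rw [hxtilde, ← hb, hwdef, mulVec_mulVec, mulVec_mulVec, mulVec_mulVec, ← hAA]
      rw [hSdef, Matrix.mul_assoc, Matrix.mul_assoc, Matrix.mul_assoc]
    rw [mulVec_sub, this]
  set t := w ⬝ᵥ w with htdef
  set s := w ⬝ᵥ S *ᵥ w with hsdef
  set q := w ⬝ᵥ (S * S) *ᵥ w with hqdef
  have ht0 : 0 ≤ t := by
    simpa [htdef] using dotProduct_self_star_nonneg w
  have hqs : q ≤ E * s := by
    have h := psd_apply_aux hS3 w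
    rw [sub_mulVec, dotProduct_sub, smul_mulVec, dotProduct_smul] at h
    simp only [smul_eq_mul] at h
    linarith [h]
  have hts : t ≤ E * s := by
    have h := psd_apply_aux hS1 w
    rw [sub_mulVec, dotProduct_sub, smul_mulVec, dotProduct_smul, one_mulVec] at h
    simp only [smul_eq_mul] at h
    linarith [h]
  have hst : s ≤ E * t := by
    have h := psd_apply_aux hS2 w
    rw [sub_mulVec, dotProduct_sub, smul_mulVec, dotProduct_smul, one_mulVec] at h
    simp only [smul_eq_mul] at h
    have hexp : Real.exp (-ε) * E = 1 := by rw [hEdef, ← Real.exp_add]; simp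
    have h2 : Real.exp (-ε) * s ≤ t := by rw [htdef, hsdef]; linarith
    nlinarith [mul_le_mul_of_nonneg_left h2 hE0.le, hexp, hE0]
  -- quadratic form identities
  have hMe : (xstar - xtilde) ⬝ᵥ M₀ *ᵥ (xstar - xtilde) = t - 2 * s + q := by
    rw [← hAA, ← mulVec_mulVec, ← dot_mulVec_symm hAT, hAe]
    have hSw : (S *ᵥ w) ⬝ᵥ (S *ᵥ w) = q := by
      rw [dot_mulVec_symm hST, mulVec_mulVec]
    have hsw2 : (S *ᵥ w) ⬝ᵥ w = s := by rw [dot_mulVec_symm hST]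
    rw [dotProduct_sub, sub_dotProduct, sub_dotProduct, hSw, hsw2, ← htdef]
    have : w ⬝ᵥ (S *ᵥ w) = s := hsdef.symm
    rw [this]; ring
  have hMx : xstar ⬝ᵥ M₀ *ᵥ xstar = t := by
    rw [← hAA, ← mulVec_mulVec, ← dot_mulVec_symm hAT, ← hwdef, htdef]
  -- scalar inequality
  have hs0 : 0 ≤ s := by nlinarith [ht0, hts, hE0]
  have key : t - 2 * s + q ≤ 2 * E * (E - 1) * t := by
    rcases le_or_gt E 2 with hE2 | hE2
    · nlinarith [hqs, hts, hst, ht0, hE1, hs0]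
    · nlinarith [hqs, hts, hst, ht0, hE1, hs0]
  -- conclude
  have hc0 : 0 ≤ 2 * E * (E - 1) := by nlinarith [hE1, hE0]
  rw [Mnorm, Mnorm, hMe, hMx, ← Real.sqrt_mul hc0]
  exact Real.sqrt_le_sqrt key
end

section
/- Let M₀ be an n×n real symmetric positive definite matrix, let ε ≥ 0, and let Z₀ be an n×n real symmetric positive semidefinite matrix with Z₀ ≈_ε M₀⁻¹. For b₀ ∈ ℝⁿ let x⋆ = M₀⁻¹ b₀ and x̃ = Z₀ b₀. Then b₀ᵀ Z₀ b₀ ≤ e^ε · (x⋆)ᵀ M₀ x⋆ and ‖x⋆ − x̃‖²_{M₀} ≤ 2(e^ε − 1) · b₀ᵀ Z₀ b₀. -/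
open Matrix

lemma psd_nonneg {n : ℕ} {Z : Matrix (Fin n) (Fin n) ℝ} (hZ : Z.PosSemidef)
    (x : Fin n → ℝ) : 0 ≤ x ⬝ᵥ Z *ᵥ x := by
  simpa using hZ.dotProduct_mulVec_nonneg x

lemma symm_form {n : ℕ} {Z : Matrix (Fin n) (Fin n) ℝ} (hZ : Z.IsHermitian)
    (x y : Fin n → ℝ) : x ⬝ᵥ Z *ᵥ y = y ⬝ᵥ Z *ᵥ x := by
  have hT : Zᵀ = Z := by
    have := hZ; rwa [Matrix.IsHermitian, conjTranspose_eq_transpose_of_trivial] at this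
  rw [dotProduct_mulVec, show x ᵥ* Z = Z *ᵥ x from by conv_rhs => rw [← hT, mulVec_transpose],
    dotProduct_comm]

lemma cs {n : ℕ} {Z : Matrix (Fin n) (Fin n) ℝ} (hZ : Z.PosSemidef)
    (x y : Fin n → ℝ) :
    (x ⬝ᵥ Z *ᵥ y)^2 ≤ (x ⬝ᵥ Z *ᵥ x) * (y ⬝ᵥ Z *ᵥ y) := by
  set a := x ⬝ᵥ Z *ᵥ x with ha
  set b := x ⬝ᵥ Z *ᵥ y with hb
  set c := y ⬝ᵥ Z *ᵥ y with hc
  have hsym : y ⬝ᵥ Z *ᵥ x = b := (symm_form hZ.1 x y).symm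
  have key : ∀ t : ℝ, 0 ≤ a - 2*t*b + t^2*c := by
    intro t
    have h := psd_nonneg hZ (x - t • y)
    simp only [Matrix.mulVec_sub, Matrix.mulVec_smul, sub_dotProduct, dotProduct_sub,
      smul_dotProduct, dotProduct_smul, smul_eq_mul] at h
    rw [← ha, ← hb, ← hc, hsym] at h
    nlinarith [h]
  have hc0 : 0 ≤ c := psd_nonneg hZ y
  have ha0 : 0 ≤ a := psd_nonneg hZ x
  rcases eq_or_lt_of_le hc0 with h0 | hpos
  · have hb0 : b = 0 := by
      by_contra hb0
      have h1 := key ((a+1)/(2*b))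
      rw [← h0] at h1
      field_simp at h1
      have h2 : a * (2 * b) - 2 * (a + 1) * b = -2 * b := by ring
      rw [show (2^2*b^2*(a-(a+1)) + 0*(a+1)^2)/b^2 = -4 from by
        rw [div_eq_iff (pow_ne_zero 2 hb0)]; ring] at h1
      linarith
    rw [hb0, ← h0]; norm_num
  · have h1 := key (b/c)
    have h2 : a - 2*(b/c)*b + (b/c)^2*c = a - b^2/c := by field_simp; ring
    rw [h2] at h1
    rw [← sub_nonneg]
    have : a*c - b^2 = (a - b^2/c)*c := by field_simp
    rw [this]
    positivity

lemma loew_le {n : ℕ} {P Q : Matrix (Fin n) (Fin n) ℝ} (h : (Q - P).PosSemidef)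
    (x : Fin n → ℝ) : x ⬝ᵥ P *ᵥ x ≤ x ⬝ᵥ Q *ᵥ x := by
  have := psd_nonneg h x
  rw [Matrix.sub_mulVec, dotProduct_sub] at this
  linarith

theorem stmt_6' {n : ℕ} (M₀ Z₀ : Matrix (Fin n) (Fin n) ℝ)
    (hM : M₀.PosDef) (ε : ℝ) (hε : 0 ≤ ε) (hZ : Z₀.PosSemidef)
    (hZM : ((M₀⁻¹ - Real.exp (-ε) • Z₀).PosSemidef) ∧ ((Real.exp ε • Z₀ - M₀⁻¹).PosSemidef))
    (b₀ : Fin n → ℝ) (xstar xtilde : Fin n → ℝ)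
    (hxstar : xstar = M₀⁻¹ *ᵥ b₀) (hxtilde : xtilde = Z₀ *ᵥ b₀) :
    b₀ ⬝ᵥ Z₀ *ᵥ b₀ ≤ Real.exp ε * (xstar ⬝ᵥ M₀ *ᵥ xstar) ∧
    (xstar - xtilde) ⬝ᵥ M₀ *ᵥ (xstar - xtilde) ≤
      2 * (Real.exp ε - 1) * (b₀ ⬝ᵥ Z₀ *ᵥ b₀) := by
  subst hxstar hxtilde
  set E := Real.exp ε with hEdef
  have hE : 0 < E := Real.exp_pos ε
  have hmul : Real.exp (-ε) * E = 1 := by rw [← Real.exp_add]; simp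
  have hdet : IsUnit M₀.det := isUnit_iff_ne_zero.mpr hM.det_pos.ne'
  have hMinv : M₀ * M₀⁻¹ = 1 := Matrix.mul_nonsing_inv _ hdet
  have hinvM : M₀⁻¹ * M₀ = 1 := Matrix.nonsing_inv_mul _ hdet
  have hMb : ∀ u : Fin n → ℝ, M₀ *ᵥ (M₀⁻¹ *ᵥ u) = u := fun u => by
    rw [mulVec_mulVec, hMinv, one_mulVec]
  have hbM : ∀ u : Fin n → ℝ, M₀⁻¹ *ᵥ (M₀ *ᵥ u) = u := fun u => by
    rw [mulVec_mulVec, hinvM, one_mulVec]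
  -- scalar form inequalities
  have h1 : ∀ x : Fin n → ℝ, Real.exp (-ε) * (x ⬝ᵥ Z₀ *ᵥ x) ≤ x ⬝ᵥ M₀⁻¹ *ᵥ x := by
    intro x
    have := loew_le hZM.1 x
    rwa [smul_mulVec, dotProduct_smul, smul_eq_mul] at this
  have h2 : ∀ x : Fin n → ℝ, x ⬝ᵥ M₀⁻¹ *ᵥ x ≤ E * (x ⬝ᵥ Z₀ *ᵥ x) := by
    intro x
    have := loew_le hZM.2 x
    rwa [smul_mulVec, dotProduct_smul, smul_eq_mul] at this
  have h1' : ∀ x : Fin n → ℝ, x ⬝ᵥ Z₀ *ᵥ x ≤ E * (x ⬝ᵥ M₀⁻¹ *ᵥ x) := by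
    intro x
    have h := mul_le_mul_of_nonneg_left (h1 x) hE.le
    rwa [← mul_assoc, mul_comm E (Real.exp (-ε)), hmul, one_mul] at h
  set s := b₀ ⬝ᵥ Z₀ *ᵥ b₀ with hs
  set m := b₀ ⬝ᵥ M₀⁻¹ *ᵥ b₀ with hm
  have hs0 : 0 ≤ s := psd_nonneg hZ b₀
  set w : Fin n → ℝ := Z₀ *ᵥ b₀ with hw
  set v : Fin n → ℝ := M₀ *ᵥ w with hv
  set t := w ⬝ᵥ M₀ *ᵥ w with ht
  have ht0 : 0 ≤ t := psd_nonneg hM.posSemidef w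
  -- xstar ⬝ M₀ xstar = m
  have hxMx : (M₀⁻¹ *ᵥ b₀) ⬝ᵥ M₀ *ᵥ (M₀⁻¹ *ᵥ b₀) = m := by
    rw [hMb, dotProduct_comm]
  constructor
  · rw [hxMx]; exact h1' b₀
  · -- expansion
    have hcross1 : (M₀⁻¹ *ᵥ b₀) ⬝ᵥ M₀ *ᵥ w = s := by
      rw [symm_form hM.1 _ w, hMb, dotProduct_comm]
    have hexp : (M₀⁻¹ *ᵥ b₀ - Z₀ *ᵥ b₀) ⬝ᵥ M₀ *ᵥ (M₀⁻¹ *ᵥ b₀ - Z₀ *ᵥ b₀)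
        = m - 2*s + t := by
      rw [Matrix.mulVec_sub, sub_dotProduct, dotProduct_sub, dotProduct_sub,
        hxMx, hcross1, ← hw, symm_form hM.1 w (M₀⁻¹ *ᵥ b₀), hcross1, ← ht]
      ring
    rw [hexp]
    -- bound t via Cauchy-Schwarz
    have hvZv : v ⬝ᵥ Z₀ *ᵥ v ≤ E * t := by
      have h := h1' v
      have : v ⬝ᵥ M₀⁻¹ *ᵥ v = t := by
        rw [hv, hbM, dotProduct_comm]
      linarith [this ▸ h]
    have hbZv : b₀ ⬝ᵥ Z₀ *ᵥ v = t := by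
      rw [symm_form hZ.1 b₀ v, ← hw, ht, dotProduct_comm]
    have hcs := cs hZ b₀ v
    rw [hbZv] at hcs
    have htEs : t ≤ E * s := by
      rcases eq_or_lt_of_le ht0 with h0 | h0
      · rw [← h0]; positivity
      · have : t^2 ≤ s * (E * t) :=
          hcs.trans (mul_le_mul_of_nonneg_left hvZv hs0)
        nlinarith
    have hmEs : m ≤ E * s := h2 b₀
    linarith

theorem stmt_6 {n : ℕ} (M₀ Z₀ : Matrix (Fin n) (Fin n) ℝ)
    (hM : M₀.PosDef) (ε : ℝ) (hε : 0 ≤ ε) (hZ : Z₀.PosSemidef)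
    (hZM : ApproxA ε Z₀ M₀⁻¹)
    (b₀ : Fin n → ℝ) (xstar xtilde : Fin n → ℝ)
    (hxstar : xstar = M₀⁻¹ *ᵥ b₀) (hxtilde : xtilde = Z₀ *ᵥ b₀) :
    b₀ ⬝ᵥ Z₀ *ᵥ b₀ ≤ Real.exp ε * (xstar ⬝ᵥ M₀ *ᵥ xstar) ∧
    (xstar - xtilde) ⬝ᵥ M₀ *ᵥ (xstar - xtilde) ≤
      2 * (Real.exp ε - 1) * (b₀ ⬝ᵥ Z₀ *ᵥ b₀) := by
  exact stmt_6' M₀ Z₀ hM ε hε hZ ⟨hZM.1, hZM.2⟩ b₀ xstar xtilde hxstar hxtilde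
end

section
/- Let M = D − A be an SDDM matrix with its standard splitting, where D is the positive diagonal part and A is the nonnegative symmetric off-diagonal part. Then D − A·D⁻¹·A is also an SDDM matrix. -/
open Matrix

/-- A real matrix is SDDM if it is symmetric positive definite, has nonpositive
off-diagonal entries, and is diagonally dominant. -/
def IsSDDM {n : ℕ} (M : Matrix (Fin n) (Fin n) ℝ) : Prop :=
  M.PosDef ∧ (∀ i j, i ≠ j → M i j ≤ 0) ∧
    ∀ i, ∑ j ∈ Finset.univ.erase i, |M i j| ≤ M i i

lemma aux_diag_pos {n : ℕ} {M : Matrix (Fin n) (Fin n) ℝ} (hM : M.PosDef) (i : Fin n) :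
    0 < M i i := by
  have hne : (Pi.single i 1 : Fin n → ℝ) ≠ 0 := by
    intro h
    have := congrFun h i
    simp at this
  have := hM.dotProduct_mulVec_pos hne
  simpa [dotProduct, mulVec, Pi.single_apply, Finset.mul_sum, mul_comm] using this

lemma aux_psd_det {n : ℕ} {N : Matrix (Fin n) (Fin n) ℝ} (h : N.PosSemidef)
    (hd : N.det ≠ 0) : N.PosDef := by
  refine Matrix.PosDef.of_dotProduct_mulVec_pos h.1 fun x hx => ?_
  rcases (h.dotProduct_mulVec_nonneg x).lt_or_eq with hlt | heq
  · exact hlt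
  · exact absurd ((Matrix.exists_mulVec_eq_zero_iff).mp
      ⟨x, hx, (h.dotProduct_mulVec_zero_iff x).mp heq.symm⟩) hd

theorem stmt_7 {n : ℕ} (M D A : Matrix (Fin n) (Fin n) ℝ)
    (hM : IsSDDM M)
    (hD : D = Matrix.diagonal (fun i => M i i))
    (hA : A = D - M) :
    IsSDDM (D - A * D⁻¹ * A) := by
  obtain ⟨hMpd, hMoff, hMdom⟩ := hM
  have hdpos : ∀ i, 0 < M i i := aux_diag_pos hMpd
  have hdne : ∀ i, M i i ≠ 0 := fun i => (hdpos i).ne'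
  have hMsymm : ∀ i j, M j i = M i j := fun i j => by
    have := hMpd.1.apply i j
    simpa using this
  -- inverse of D
  have hDinv : D⁻¹ = Matrix.diagonal (fun i => (M i i)⁻¹) := by
    rw [hD]
    apply Matrix.inv_eq_right_inv
    rw [Matrix.diagonal_mul_diagonal]
    have : (fun i => M i i * (M i i)⁻¹) = fun _ => (1:ℝ) :=
      funext fun i => mul_inv_cancel₀ (hdne i)
    rw [this, Matrix.diagonal_one]
  -- entries of A
  have hAdiag : ∀ i, A i i = 0 := fun i => by
    simp [hA, hD, Matrix.sub_apply, Matrix.diagonal_apply_eq]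
  have hAoff : ∀ i j, i ≠ j → A i j = -(M i j) := fun i j hij => by
    simp [hA, hD, Matrix.sub_apply, Matrix.diagonal_apply_ne _ hij]
  have hAnn : ∀ i j, 0 ≤ A i j := by
    intro i j
    rcases eq_or_ne i j with rfl | hij
    · rw [hAdiag]
    · rw [hAoff i j hij]
      linarith [hMoff i j hij]
  have hAsymm : ∀ i j, A j i = A i j := by
    intro i j
    rcases eq_or_ne i j with rfl | hij
    · rfl
    · rw [hAoff i j hij, hAoff j i (Ne.symm hij), hMsymm]
  -- row sums of A
  have hrow : ∀ i, ∑ j, A i j ≤ M i i := by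
    intro i
    have h1 : ∑ j, A i j = ∑ j ∈ Finset.univ.erase i, A i j := by
      rw [← Finset.add_sum_erase _ _ (Finset.mem_univ i), hAdiag, zero_add]
    have h2 : ∑ j ∈ Finset.univ.erase i, A i j = ∑ j ∈ Finset.univ.erase i, |M i j| := by
      apply Finset.sum_congr rfl
      intro j hj
      have hij : i ≠ j := (Finset.ne_of_mem_erase hj).symm
      rw [hAoff i j hij, abs_of_nonpos (hMoff i j hij)]
    rw [h1, h2]
    exact hMdom i
  -- entries of S = A * D⁻¹ * A
  set S : Matrix (Fin n) (Fin n) ℝ := A * D⁻¹ * A with hS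
  have hSentry : ∀ i j, S i j = ∑ k, A i k * (M k k)⁻¹ * A k j := by
    intro i j
    rw [hS, Matrix.mul_apply]
    apply Finset.sum_congr rfl
    intro k _
    rw [hDinv, Matrix.mul_diagonal]
  have hSnn : ∀ i j, 0 ≤ S i j := by
    intro i j
    rw [hSentry]
    apply Finset.sum_nonneg
    intro k _
    exact mul_nonneg (mul_nonneg (hAnn i k) (inv_nonneg.2 (hdpos k).le)) (hAnn k j)
  have hSsymm : ∀ i j, S j i = S i j := by
    intro i j
    rw [hSentry, hSentry]
    apply Finset.sum_congr rfl
    intro k _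
    rw [hAsymm k i, hAsymm j k]
    ring
  -- total row sums of S
  have hScol : ∀ i, ∑ j, S i j ≤ M i i := by
    intro i
    have h1 : ∑ j, S i j = ∑ k, A i k * (M k k)⁻¹ * (∑ j, A k j) := by
      simp_rw [hSentry]
      rw [Finset.sum_comm]
      apply Finset.sum_congr rfl
      intro k _
      rw [Finset.mul_sum]
    rw [h1]
    calc ∑ k, A i k * (M k k)⁻¹ * (∑ j, A k j)
        ≤ ∑ k, A i k * (M k k)⁻¹ * M k k := by
          apply Finset.sum_le_sum
          intro k _
          exact mul_le_mul_of_nonneg_left (hrow k)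
            (mul_nonneg (hAnn i k) (inv_nonneg.2 (hdpos k).le))
      _ = ∑ k, A i k := by
          apply Finset.sum_congr rfl
          intro k _
          rw [mul_assoc, inv_mul_cancel₀ (hdne k), mul_one]
      _ ≤ M i i := hrow i
  -- entries of N
  have hNdiag : ∀ i, (D - S) i i = M i i - S i i := fun i => by
    simp [hD, Matrix.sub_apply, Matrix.diagonal_apply_eq]
  have hNoff : ∀ i j, i ≠ j → (D - S) i j = -(S i j) := fun i j hij => by
    simp [hD, Matrix.sub_apply, Matrix.diagonal_apply_ne _ hij]
  -- symmetry of N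
  have hNherm : (D - S).IsHermitian := by
    ext i j
    simp only [Matrix.conjTranspose_apply, star_trivial]
    rcases eq_or_ne i j with rfl | hij
    · rfl
    · rw [hNoff j i (Ne.symm hij), hNoff i j hij, hSsymm]
  -- positive semidefiniteness of N
  have hNpsd : (D - S).PosSemidef := by
    refine Matrix.PosSemidef.of_dotProduct_mulVec_nonneg hNherm fun x => ?_
    rw [star_trivial, Matrix.sub_mulVec, dotProduct_sub]
    set y : Fin n → ℝ := A *ᵥ x with hy
    have hAT : Aᵀ = A := by
      ext i j
      rw [Matrix.transpose_apply, hAsymm]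
    have hterm2 : x ⬝ᵥ S *ᵥ x = ∑ i, (M i i)⁻¹ * y i ^ 2 := by
      have hxA : x ᵥ* A = y := by rw [← hAT, Matrix.vecMul_transpose]
      rw [hS, ← Matrix.mulVec_mulVec, ← Matrix.mulVec_mulVec,
        Matrix.dotProduct_mulVec, hxA]
      rw [hDinv]
      simp only [dotProduct, Matrix.mulVec_diagonal]
      apply Finset.sum_congr rfl
      intro i _
      ring
    have hterm1 : x ⬝ᵥ D *ᵥ x = ∑ i, M i i * x i ^ 2 := by
      rw [hD]
      simp only [dotProduct, Matrix.mulVec_diagonal]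
      apply Finset.sum_congr rfl
      intro i _
      ring
    rw [hterm1, hterm2, sub_nonneg]
    -- Cauchy–Schwarz per row
    have key1 : ∀ i, (M i i)⁻¹ * y i ^ 2 ≤ ∑ j, A i j * x j ^ 2 := by
      intro i
      have hcs : y i ^ 2 ≤ (∑ j, A i j) * ∑ j, A i j * x j ^ 2 := by
        have := Finset.sum_sq_le_sum_mul_sum_of_sq_eq_mul Finset.univ
          (r := fun j => A i j * x j) (f := fun j => A i j)
          (g := fun j => A i j * x j ^ 2)
          (fun j _ => hAnn i j)
          (fun j _ => mul_nonneg (hAnn i j) (sq_nonneg _))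
          (fun j _ => by ring)
        simpa [hy, Matrix.mulVec, dotProduct] using this
      have hnn : (0:ℝ) ≤ ∑ j, A i j * x j ^ 2 :=
        Finset.sum_nonneg fun j _ => mul_nonneg (hAnn i j) (sq_nonneg _)
      have hcs2 : y i ^ 2 ≤ M i i * ∑ j, A i j * x j ^ 2 :=
        hcs.trans (mul_le_mul_of_nonneg_right (hrow i) hnn)
      calc (M i i)⁻¹ * y i ^ 2
          ≤ (M i i)⁻¹ * (M i i * ∑ j, A i j * x j ^ 2) :=
            mul_le_mul_of_nonneg_left hcs2 (inv_nonneg.2 (hdpos i).le)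
        _ = ∑ j, A i j * x j ^ 2 := by
            rw [← mul_assoc, inv_mul_cancel₀ (hdne i), one_mul]
    calc ∑ i, (M i i)⁻¹ * y i ^ 2
        ≤ ∑ i, ∑ j, A i j * x j ^ 2 := Finset.sum_le_sum fun i _ => key1 i
      _ = ∑ j, (∑ i, A i j) * x j ^ 2 := by
          rw [Finset.sum_comm]
          exact Finset.sum_congr rfl fun j _ => (Finset.sum_mul _ _ _).symm
      _ ≤ ∑ j, M j j * x j ^ 2 := by
          apply Finset.sum_le_sum
          intro j _
          apply mul_le_mul_of_nonneg_right _ (sq_nonneg _)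
          calc ∑ i, A i j = ∑ i, A j i := Finset.sum_congr rfl fun i _ => (hAsymm i j).symm
            _ ≤ M j j := hrow j
  -- positive definiteness of D + A
  have hDApd : (D + A).PosDef := by
    refine Matrix.PosDef.of_dotProduct_mulVec_pos ?_ ?_
    · ext i j
      simp only [Matrix.conjTranspose_apply, star_trivial, Matrix.add_apply]
      rcases eq_or_ne i j with rfl | hij
      · rfl
      · rw [hD, Matrix.diagonal_apply_ne _ (Ne.symm hij),
          Matrix.diagonal_apply_ne _ hij, hAsymm]
    · intro x hx
      rw [star_trivial]
      set z : Fin n → ℝ := fun i => |x i| with hz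
      have hzne : z ≠ 0 := by
        intro h
        apply hx
        funext i
        have := congrFun h i
        simpa [hz, abs_eq_zero] using this
      have hMz : 0 < z ⬝ᵥ M *ᵥ z := by
        have := hMpd.dotProduct_mulVec_pos hzne
        simpa using this
      refine lt_of_lt_of_le hMz ?_
      simp only [dotProduct, Matrix.mulVec, dotProduct, Finset.mul_sum]
      apply Finset.sum_le_sum
      intro i _
      apply Finset.sum_le_sum
      intro j _
      rcases eq_or_ne i j with rfl | hij
      · have : (D + A) i i = M i i := by
          rw [Matrix.add_apply, hD, Matrix.diagonal_apply_eq, hAdiag, add_zero]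
        rw [this, hz]
        simp only
        have h1 : |x i| * |x i| = x i * x i := abs_mul_abs_self (x i)
        have h2 : |x i| * (M i i * |x i|) = x i * (M i i * x i) := by
          calc |x i| * (M i i * |x i|) = M i i * (|x i| * |x i|) := by ring
            _ = M i i * (x i * x i) := by rw [h1]
            _ = x i * (M i i * x i) := by ring
        exact h2.le
      · have hDA : (D + A) i j = -(M i j) := by
          rw [Matrix.add_apply, hD, Matrix.diagonal_apply_ne _ hij, hAoff i j hij, zero_add]
        rw [hDA, hz]
        simp only
        have ha : 0 ≤ -(M i j) := by linarith [hMoff i j hij]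
        have habs : x i * x j ≥ -(|x i| * |x j|) := by
          rw [← abs_mul]
          exact neg_abs_le _
        nlinarith [habs, ha]
  -- determinant of N is nonzero
  have hDdet : D.det ≠ 0 := by
    rw [hD, Matrix.det_diagonal]
    exact Finset.prod_ne_zero_iff.2 fun i _ => hdne i
  have hDD : D * D⁻¹ = 1 := Matrix.mul_nonsing_inv D (Ne.isUnit hDdet)
  have hDDi : D⁻¹ * D = 1 := Matrix.nonsing_inv_mul D (Ne.isUnit hDdet)
  have hfact : D - S = M * D⁻¹ * (D + A) := by
    have hMDA : M = D - A := by rw [hA]; abel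
    have h1 : A * D⁻¹ * D = A := by rw [mul_assoc, hDDi, mul_one]
    have : M * D⁻¹ * (D + A) = D - A * D⁻¹ * A := by
      rw [hMDA, Matrix.sub_mul, Matrix.sub_mul, hDD, one_mul,
        mul_add (A * D⁻¹) D A, h1]
      abel
    rw [hS, this]
  have hNdet : (D - S).det ≠ 0 := by
    rw [hfact, Matrix.det_mul, Matrix.det_mul]
    apply mul_ne_zero
    apply mul_ne_zero
    · exact hMpd.det_pos.ne'
    · rw [Matrix.det_nonsing_inv, Ring.inverse_eq_inv]
      exact inv_ne_zero hDdet
    · exact hDApd.det_pos.ne'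
  -- assemble
  refine ⟨aux_psd_det hNpsd hNdet, ?_, ?_⟩
  · intro i j hij
    rw [hNoff i j hij]
    linarith [hSnn i j]
  · intro i
    have habs : ∀ j ∈ Finset.univ.erase i, |(D - S) i j| = S i j := by
      intro j hj
      have hij : i ≠ j := (Finset.ne_of_mem_erase hj).symm
      rw [hNoff i j hij, abs_neg, abs_of_nonneg (hSnn i j)]
    rw [Finset.sum_congr rfl habs, hNdiag]
    have h1 : S i i + ∑ j ∈ Finset.univ.erase i, S i j = ∑ j, S i j :=
      Finset.add_sum_erase _ _ (Finset.mem_univ i)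
    linarith [hScol i]
end

section
/- Let M = D − A be an SDDM matrix, where D is a positive diagonal matrix and A is a symmetric matrix, such that D − A and D − A·D⁻¹·A are invertible. Then (D − A)⁻¹ = (1/2)·[ D⁻¹ + (I + D⁻¹A)·(D − A·D⁻¹·A)⁻¹·(I + A·D⁻¹) ]. -/
open Matrix

theorem stmt_8 {n : ℕ} (D A : Matrix (Fin n) (Fin n) ℝ)
    (d : Fin n → ℝ) (hd : ∀ i, 0 < d i) (hD : D = Matrix.diagonal d)
    (hA : A.IsSymm) (hSDDM : IsSDDM (D - A))
    (h1 : IsUnit (D - A).det) (h2 : IsUnit (D - A * D⁻¹ * A).det) :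
    (D - A)⁻¹ =
      (1 / 2 : ℝ) • (D⁻¹ + (1 + D⁻¹ * A) * (D - A * D⁻¹ * A)⁻¹ * (1 + A * D⁻¹)) := by
  have hDu : IsUnit D.det := by
    rw [hD, Matrix.det_diagonal]
    exact isUnit_iff_ne_zero.mpr (Finset.prod_ne_zero_iff.mpr fun i _ => (hd i).ne')
  have hDD : D * D⁻¹ = 1 := Matrix.mul_nonsing_inv D hDu
  have hB : (D - A * D⁻¹ * A) * (D - A * D⁻¹ * A)⁻¹ = 1 := Matrix.mul_nonsing_inv _ h2
  apply Matrix.inv_eq_right_inv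
  have key : (D - A) * (1 + D⁻¹ * A) = D - A * D⁻¹ * A := by
    have hDDA : D * (D⁻¹ * A) = A := by rw [← mul_assoc, hDD, one_mul]
    simp only [sub_mul, mul_add, mul_one, hDDA, mul_assoc]
    abel
  have hDinv : (D - A) * D⁻¹ = 1 - A * D⁻¹ := by rw [sub_mul, hDD]
  calc (D - A) * ((1 / 2 : ℝ) • (D⁻¹ + (1 + D⁻¹ * A) * (D - A * D⁻¹ * A)⁻¹ * (1 + A * D⁻¹)))
      = (1 / 2 : ℝ) • ((D - A) * D⁻¹ +
          ((D - A) * (1 + D⁻¹ * A)) * ((D - A * D⁻¹ * A)⁻¹ * (1 + A * D⁻¹))) := by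
        rw [mul_smul_comm, mul_add]
        simp only [mul_assoc]
    _ = (1 / 2 : ℝ) • ((1 - A * D⁻¹) + (1 + A * D⁻¹)) := by
        rw [hDinv, key, ← mul_assoc, hB, one_mul]
    _ = 1 := by
        rw [sub_add_add_cancel, ← two_smul ℝ (1 : Matrix (Fin n) (Fin n) ℝ), smul_smul]
        norm_num
end

section
/- Let M₀, M₁, …, M_d be SDDM matrices with M_i = D_i − A_i, where each D_i is a positive diagonal matrix and each A_i is a nonnegative symmetric matrix, and let ε₀, ε₁, …, ε_d be nonnegative reals such that: (1) for i = 1,…,d, D_i − A_i ≈_{ε_{i−1}} D_{i−1} − A_{i−1}·D_{i−1}⁻¹·A_{i−1}; (2) for i = 1,…,d, D_i ≈_{ε_{i−1}} D_{i−1}; and (3) D_d ≈_{ε_d} D_d − A_d. Define Z_d = D_d⁻¹ and, for i = d−1 down to 0, Z_i = (1/2)·[ D_i⁻¹ + (I + D_i⁻¹A_i)·Z_{i+1}·(I + A_i·D_i⁻¹) ]. Then Z₀ ≈_{ε₀+ε₁+⋯+ε_d} M₀⁻¹. -/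
open Matrix

namespace StmtNineAux

variable {n : ℕ}

lemma psd_smul {c : ℝ} (hc : 0 ≤ c) {P : Matrix (Fin n) (Fin n) ℝ}
    (hP : P.PosSemidef) : (c • P).PosSemidef := by
  refine .of_dotProduct_mulVec_nonneg ?_ fun x => ?_
  · unfold Matrix.IsHermitian
    rw [conjTranspose_smul, hP.1]; simp
  · simp only [smul_mulVec, dotProduct_smul, smul_eq_mul]
    exact mul_nonneg hc (hP.dotProduct_mulVec_nonneg x)

lemma pd_smul {c : ℝ} (hc : 0 < c) {P : Matrix (Fin n) (Fin n) ℝ}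
    (hP : P.PosDef) : (c • P).PosDef := by
  refine .of_dotProduct_mulVec_pos ?_ fun x hx => ?_
  · unfold Matrix.IsHermitian
    rw [conjTranspose_smul, hP.1]; simp
  · simp only [smul_mulVec, dotProduct_smul, smul_eq_mul]
    exact mul_pos hc (hP.dotProduct_mulVec_pos hx)

lemma loewner_trans {P Q R : Matrix (Fin n) (Fin n) ℝ} (h1 : LoewnerLE P Q)
    (h2 : LoewnerLE Q R) : LoewnerLE P R := by
  have := h2.add h1
  simpa [LoewnerLE, sub_add_sub_cancel] using this

lemma loewner_smul {c : ℝ} (hc : 0 ≤ c) {P Q : Matrix (Fin n) (Fin n) ℝ}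
    (h : LoewnerLE P Q) : LoewnerLE (c • P) (c • Q) := by
  have := psd_smul hc h
  simpa [LoewnerLE, smul_sub] using this

lemma symm_of_herm {P : Matrix (Fin n) (Fin n) ℝ} (hP : P.IsHermitian) : Pᵀ = P := by
  rw [← Matrix.conjTranspose_eq_transpose_of_trivial]; exact hP

lemma inv_antitone {P Q : Matrix (Fin n) (Fin n) ℝ} (hP : P.PosDef) (hQ : Q.PosDef)
    (h : LoewnerLE P Q) : LoewnerLE Q⁻¹ P⁻¹ := by
  have hPdet : IsUnit P.det := (Matrix.isUnit_iff_isUnit_det P).mp hP.isUnit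
  have hQdet : IsUnit Q.det := (Matrix.isUnit_iff_isUnit_det Q).mp hQ.isUnit
  have hPt : Pᵀ = P := symm_of_herm hP.isHermitian
  refine .of_dotProduct_mulVec_nonneg ?_ fun x => ?_
  · exact hP.inv.isHermitian.sub hQ.inv.isHermitian
  · 
    set y : Fin n → ℝ := Q⁻¹ *ᵥ x with hy
    set z : Fin n → ℝ := P⁻¹ *ᵥ x - y with hz
    have hQy : Q *ᵥ y = x := by
      rw [hy, mulVec_mulVec, Matrix.mul_nonsing_inv _ hQdet, one_mulVec]
    have h0 : 0 ≤ z ⬝ᵥ (P *ᵥ z) := by simpa using hP.posSemidef.dotProduct_mulVec_nonneg z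
    have h1 : y ⬝ᵥ (P *ᵥ y) ≤ y ⬝ᵥ (Q *ᵥ y) := by
      have := h.dotProduct_mulVec_nonneg y
      simp only [star_trivial, sub_mulVec, dotProduct_sub] at this
      linarith
    have key1 : (P⁻¹ *ᵥ x) ⬝ᵥ (P *ᵥ y) = x ⬝ᵥ y := by
      rw [dotProduct_mulVec, ← mulVec_transpose, hPt,
        mulVec_mulVec, Matrix.mul_nonsing_inv _ hPdet, one_mulVec]
    have key2 : (P⁻¹ *ᵥ x) ⬝ᵥ x = x ⬝ᵥ (P⁻¹ *ᵥ x) := dotProduct_comm _ _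
    have key3 : y ⬝ᵥ x = x ⬝ᵥ y := dotProduct_comm _ _
    have key4 : y ⬝ᵥ (Q *ᵥ y) = x ⬝ᵥ y := by
      rw [hQy]; exact dotProduct_comm _ _
    have key5 : x ⬝ᵥ y = x ⬝ᵥ (Q⁻¹ *ᵥ x) := rfl
    have hPz : P *ᵥ z = x - P *ᵥ y := by
      rw [hz, mulVec_sub, mulVec_mulVec, Matrix.mul_nonsing_inv _ hPdet, one_mulVec]
    have expand : z ⬝ᵥ (P *ᵥ z) =
        x ⬝ᵥ (P⁻¹ *ᵥ x) - 2 * (x ⬝ᵥ y) + y ⬝ᵥ (P *ᵥ y) := by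
      rw [hPz, hz]
      simp only [sub_dotProduct, dotProduct_sub]
      linarith [key1, key2, key3]
    have goal' : 0 ≤ x ⬝ᵥ (P⁻¹ *ᵥ x) - x ⬝ᵥ (Q⁻¹ *ᵥ x) := by
      rw [← key5]
      linarith
    simpa [sub_mulVec, dotProduct_sub] using goal'

lemma approx_trans {α β : ℝ} {X Y W : Matrix (Fin n) (Fin n) ℝ}
    (h1 : ApproxA α X Y) (h2 : ApproxA β Y W) : ApproxA (α + β) X W := by
  constructor
  · have hs : Real.exp (-(α + β)) • X = Real.exp (-β) • (Real.exp (-α) • X) := by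
      rw [smul_smul, ← Real.exp_add]; ring_nf
    rw [hs]
    exact loewner_trans (loewner_smul (Real.exp_nonneg _) h1.1) h2.1
  · have hs : Real.exp (α + β) • X = Real.exp β • (Real.exp α • X) := by
      rw [smul_smul, ← Real.exp_add]; ring_nf
    rw [hs]
    exact loewner_trans h2.2 (loewner_smul (Real.exp_nonneg _) h1.2)

lemma posdef_of_approx {α : ℝ} {X Y : Matrix (Fin n) (Fin n) ℝ}
    (hX : X.PosDef) (h : ApproxA α X Y) : Y.PosDef := by
  have h1 := h.1
  have hpd : (Real.exp (-α) • X).PosDef := pd_smul (Real.exp_pos _) hX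
  have := hpd.add_posSemidef h1
  simpa using this

lemma smul_inv_eq {c : ℝ} (hc : c ≠ 0) {X : Matrix (Fin n) (Fin n) ℝ}
    (hX : IsUnit X.det) : (c • X)⁻¹ = c⁻¹ • X⁻¹ := by
  apply Matrix.inv_eq_right_inv
  rw [Matrix.smul_mul, Matrix.mul_smul, smul_smul, Matrix.mul_nonsing_inv _ hX,
    mul_inv_cancel₀ hc, one_smul]

lemma approx_inv {α : ℝ} {X Y : Matrix (Fin n) (Fin n) ℝ}
    (hX : X.PosDef) (hY : Y.PosDef) (h : ApproxA α X Y) : ApproxA α X⁻¹ Y⁻¹ := by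
  have hXdet : IsUnit X.det := (Matrix.isUnit_iff_isUnit_det X).mp hX.isUnit
  constructor
  · have := inv_antitone hY (pd_smul (Real.exp_pos α) hX) h.2
    rwa [smul_inv_eq (Real.exp_ne_zero α) hXdet, ← Real.exp_neg] at this
  · have := inv_antitone (pd_smul (Real.exp_pos (-α)) hX) hY h.1
    rwa [smul_inv_eq (Real.exp_ne_zero (-α)) hXdet, ← Real.exp_neg, neg_neg] at this

lemma approx_comb {α : ℝ} (hα : 0 ≤ α) {E X Y : Matrix (Fin n) (Fin n) ℝ}
    (B : Matrix (Fin n) (Fin n) ℝ) (hE : E.PosSemidef) (h : ApproxA α X Y) :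
    ApproxA α ((1/2:ℝ) • (E + Bᴴ * X * B)) ((1/2:ℝ) • (E + Bᴴ * Y * B)) := by
  constructor
  · have heq : (1/2:ℝ) • (E + Bᴴ * Y * B) - Real.exp (-α) • ((1/2:ℝ) • (E + Bᴴ * X * B))
        = (1/2:ℝ) • ((1 - Real.exp (-α)) • E + Bᴴ * (Y - Real.exp (-α) • X) * B) := by
      rw [Matrix.mul_sub, Matrix.sub_mul, Matrix.mul_smul, Matrix.smul_mul]
      module
    have he1 : Real.exp (-α) ≤ 1 := Real.exp_le_one_iff.mpr (by linarith)
    unfold LoewnerLE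
    rw [heq]
    exact psd_smul (by norm_num)
      ((psd_smul (by linarith) hE).add ((h.1).conjTranspose_mul_mul_same B))
  · have heq : Real.exp α • ((1/2:ℝ) • (E + Bᴴ * X * B)) - (1/2:ℝ) • (E + Bᴴ * Y * B)
        = (1/2:ℝ) • ((Real.exp α - 1) • E + Bᴴ * (Real.exp α • X - Y) * B) := by
      rw [Matrix.mul_sub, Matrix.sub_mul, Matrix.mul_smul, Matrix.smul_mul]
      module
    have he2 : (1:ℝ) ≤ Real.exp α := Real.one_le_exp hα
    unfold LoewnerLE
    rw [heq]
    exact psd_smul (by norm_num)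
      ((psd_smul (by linarith) hE).add ((h.2).conjTranspose_mul_mul_same B))

lemma inv_formula {Dm Am : Matrix (Fin n) (Fin n) ℝ}
    (hD : IsUnit Dm.det) (hN : IsUnit (Dm - Am * Dm⁻¹ * Am).det) :
    (Dm - Am)⁻¹ = (1 / 2 : ℝ) •
      (Dm⁻¹ + (1 + Dm⁻¹ * Am) * (Dm - Am * Dm⁻¹ * Am)⁻¹ * (1 + Am * Dm⁻¹)) := by
  set N : Matrix (Fin n) (Fin n) ℝ := Dm - Am * Dm⁻¹ * Am with hNdef
  apply Matrix.inv_eq_right_inv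
  have hDD : Dm * Dm⁻¹ = 1 := Matrix.mul_nonsing_inv _ hD
  have hNN : N * N⁻¹ = 1 := Matrix.mul_nonsing_inv _ hN
  have hstep : (Dm - Am) * (1 + Dm⁻¹ * Am) = N := by
    rw [hNdef]
    rw [sub_mul, mul_add, mul_add, mul_one, mul_one, ← mul_assoc, hDD, one_mul]
    noncomm_ring
  have hmain : (Dm - Am) * ((1 + Dm⁻¹ * Am) * N⁻¹ * (1 + Am * Dm⁻¹))
      = 1 + Am * Dm⁻¹ := by
    rw [← mul_assoc, ← mul_assoc, hstep, mul_assoc, ← mul_assoc N, hNN, one_mul]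
  rw [Matrix.mul_smul, mul_add, hmain, sub_mul, hDD]
  have h2 : (1 : Matrix (Fin n) (Fin n) ℝ) - Am * Dm⁻¹ + (1 + Am * Dm⁻¹)
      = (2:ℝ) • (1 : Matrix (Fin n) (Fin n) ℝ) := by
    rw [two_smul]; noncomm_ring
  rw [h2, smul_smul]
  norm_num

end StmtNineAux

open StmtNineAux in
theorem stmt_9 {n : ℕ} (d : ℕ)
    (D A M : ℕ → Matrix (Fin n) (Fin n) ℝ) (ε : ℕ → ℝ)
    (hM : ∀ i ≤ d, M i = D i - A i)
    (hSDDM : ∀ i ≤ d, IsSDDM (M i))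
    (hDdiag : ∀ i ≤ d, ∃ f : Fin n → ℝ, (∀ k, 0 < f k) ∧ D i = Matrix.diagonal f)
    (hAsymm : ∀ i ≤ d, (A i).IsSymm)
    (hAnonneg : ∀ i ≤ d, ∀ k l, 0 ≤ A i k l)
    (hεnonneg : ∀ i ≤ d, 0 ≤ ε i)
    (h1 : ∀ i, 1 ≤ i → i ≤ d →
      ApproxA (ε (i - 1)) (D i - A i)
        (D (i - 1) - A (i - 1) * (D (i - 1))⁻¹ * A (i - 1)))
    (h2 : ∀ i, 1 ≤ i → i ≤ d → ApproxA (ε (i - 1)) (D i) (D (i - 1)))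
    (h3 : ApproxA (ε d) (D d) (D d - A d))
    (Z : ℕ → Matrix (Fin n) (Fin n) ℝ)
    (hZd : Z d = (D d)⁻¹)
    (hZ : ∀ i < d, Z i =
      (1 / 2 : ℝ) • ((D i)⁻¹ + (1 + (D i)⁻¹ * A i) * Z (i + 1) * (1 + A i * (D i)⁻¹))) :
    ApproxA (∑ i ∈ Finset.range (d + 1), ε i) (Z 0) (M 0)⁻¹ := by
  -- basic positivity facts
  have hDpd : ∀ i ≤ d, (D i).PosDef := by
    intro i hi
    obtain ⟨f, hf, heq⟩ := hDdiag i hi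
    rw [heq]
    exact Matrix.PosDef.diagonal hf
  have hMpd : ∀ i ≤ d, (M i).PosDef := fun i hi => (hSDDM i hi).1
  have main : ∀ k i, i + k = d →
      ApproxA (∑ j ∈ Finset.Icc i d, ε j) (Z i) (M i)⁻¹ := by
    intro k
    induction k with
    | zero =>
      intro i hik
      have hid : i = d := by omega
      subst hid
      rw [Finset.Icc_self, Finset.sum_singleton, hZd]
      have h3' : ApproxA (ε i) (D i) (M i) := by rw [hM i le_rfl]; exact h3
      exact approx_inv (hDpd i le_rfl) (hMpd i le_rfl) h3'
    | succ k ih =>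
      intro i hik
      have hilt : i < d := by omega
      have hid : i ≤ d := le_of_lt hilt
      have hIH := ih (i + 1) (by omega)
      have hDdet : IsUnit (D i).det :=
        (Matrix.isUnit_iff_isUnit_det _).mp (hDpd i hid).isUnit
      set Nm : Matrix (Fin n) (Fin n) ℝ := D i - A i * (D i)⁻¹ * A i with hNm
      have h1' : ApproxA (ε i) (M (i + 1)) Nm := by
        have := h1 (i + 1) (by omega) (by omega)
        rw [Nat.add_sub_cancel] at this
        rw [hM (i + 1) (by omega)]
        exact this
      have hM1pd : (M (i + 1)).PosDef := hMpd (i + 1) (by omega)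
      have hNpd : Nm.PosDef := posdef_of_approx hM1pd h1'
      have hNdet : IsUnit Nm.det := (Matrix.isUnit_iff_isUnit_det _).mp hNpd.isUnit
      have hinv : (M i)⁻¹ = (1 / 2 : ℝ) •
          ((D i)⁻¹ + (1 + (D i)⁻¹ * A i) * Nm⁻¹ * (1 + A i * (D i)⁻¹)) := by
        rw [hM i hid]
        exact inv_formula hDdet hNdet
      have happrox : ApproxA ((∑ j ∈ Finset.Icc (i + 1) d, ε j) + ε i)
          (Z (i + 1)) Nm⁻¹ :=
        approx_trans hIH (approx_inv hM1pd hNpd h1')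
      have hαnn : 0 ≤ (∑ j ∈ Finset.Icc (i + 1) d, ε j) + ε i := by
        refine add_nonneg (Finset.sum_nonneg fun j hj => ?_) (hεnonneg i hid)
        exact hεnonneg j (Finset.mem_Icc.mp hj).2
      have hBt : (1 + A i * (D i)⁻¹)ᴴ = 1 + (D i)⁻¹ * A i := by
        rw [Matrix.conjTranspose_eq_transpose_of_trivial, transpose_add,
          transpose_one, transpose_mul, symm_of_herm (hDpd i hid).inv.isHermitian,
          hAsymm i hid]
      have hcomb := approx_comb hαnn (1 + A i * (D i)⁻¹)
        (hDpd i hid).inv.posSemidef happrox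
      rw [hBt] at hcomb
      have hsum : ∑ j ∈ Finset.Icc i d, ε j
          = (∑ j ∈ Finset.Icc (i + 1) d, ε j) + ε i := by
        rw [Finset.Icc_eq_cons_Ioc hid, Finset.sum_cons, ← Finset.Icc_add_one_left_eq_Ioc]
        ring
      rw [hZ i hilt, hsum, hinv]
      exact hcomb
  have := main d 0 (by omega)
  have hrange : Finset.range (d + 1) = Finset.Icc 0 d := by
    rw [Finset.range_eq_Ico, Finset.Ico_add_one_right_eq_Icc]
  rwa [hrange]
end

section
/- Let M₀ = D₀ − A₀ be an SDDM matrix with its standard splitting, and let κ = λ_max(M₀)/λ_min(M₀) be its condition number. Then every eigenvalue λ of the matrix D₀⁻¹A₀ is real and satisfies |λ| ≤ 1 − 1/κ. -/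
open Matrix

section Aux
variable {n : ℕ} {M : Matrix (Fin n) (Fin n) ℝ} (hM : M.IsHermitian)

lemma vecMul_eq_star_mulVec (U : Matrix (Fin n) (Fin n) ℝ) (x : Fin n → ℝ) :
    x ᵥ* U = star U *ᵥ x := by
  ext i
  simp [Matrix.mulVec, Matrix.vecMul, dotProduct, Matrix.star_eq_conjTranspose,
    Matrix.conjTranspose_apply, mul_comm]

lemma quad_eq (x : Fin n → ℝ) :
    x ⬝ᵥ (M *ᵥ x) = ∑ i, hM.eigenvalues i *
      ((star (hM.eigenvectorUnitary : Matrix (Fin n) (Fin n) ℝ) *ᵥ x) i)^2 := by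
  conv_lhs => rw [hM.spectral_theorem, Unitary.conjStarAlgAut_apply]
  rw [← Matrix.mulVec_mulVec, ← Matrix.mulVec_mulVec, dotProduct_mulVec,
    vecMul_eq_star_mulVec]
  simp only [Matrix.mulVec_diagonal, dotProduct, RCLike.ofReal_real_eq_id, Function.comp_apply,
    id_eq]
  exact Finset.sum_congr rfl fun i _ => by ring

lemma norm_eq (x : Fin n → ℝ) :
    x ⬝ᵥ x = ∑ i, ((star (hM.eigenvectorUnitary : Matrix (Fin n) (Fin n) ℝ) *ᵥ x) i)^2 := by
  have h2 : (star (hM.eigenvectorUnitary : Matrix (Fin n) (Fin n) ℝ) *ᵥ x) ⬝ᵥ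
      (star (hM.eigenvectorUnitary : Matrix (Fin n) (Fin n) ℝ) *ᵥ x) = x ⬝ᵥ x := by
    rw [show (star (hM.eigenvectorUnitary : Matrix (Fin n) (Fin n) ℝ) *ᵥ x) ⬝ᵥ
        (star (hM.eigenvectorUnitary : Matrix (Fin n) (Fin n) ℝ) *ᵥ x)
        = (x ᵥ* (hM.eigenvectorUnitary : Matrix (Fin n) (Fin n) ℝ)) ⬝ᵥ
        (star (hM.eigenvectorUnitary : Matrix (Fin n) (Fin n) ℝ) *ᵥ x) from by
      rw [vecMul_eq_star_mulVec]]
    rw [dotProduct_mulVec, Matrix.vecMul_vecMul,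
      (Matrix.mem_unitaryGroup_iff).mp hM.eigenvectorUnitary.2, Matrix.vecMul_one]
  rw [← h2]
  simp [dotProduct, sq]

-- eigenvalue bounds
lemma quad_lower [NeZero n] (x : Fin n → ℝ) :
    (⨅ i, hM.eigenvalues i) * (x ⬝ᵥ x) ≤ x ⬝ᵥ (M *ᵥ x) := by
  rw [quad_eq hM x, norm_eq hM x, Finset.mul_sum]
  refine Finset.sum_le_sum fun i _ => ?_
  exact mul_le_mul_of_nonneg_right (ciInf_le (Finite.bddBelow_range _) i) (sq_nonneg _)

lemma quad_upper [NeZero n] (x : Fin n → ℝ) :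
    x ⬝ᵥ (M *ᵥ x) ≤ (⨆ i, hM.eigenvalues i) * (x ⬝ᵥ x) := by
  rw [quad_eq hM x, norm_eq hM x, Finset.mul_sum]
  refine Finset.sum_le_sum fun i _ => ?_
  exact mul_le_mul_of_nonneg_right (le_ciSup (Finite.bddAbove_range _) i) (sq_nonneg _)

end Aux

theorem stmt_11 {n : ℕ} (M₀ D₀ A₀ : Matrix (Fin n) (Fin n) ℝ)
    (hSDDM : IsSDDM M₀)
    (hD : D₀ = Matrix.diagonal (fun i => M₀ i i))
    (hA : A₀ = D₀ - M₀)
    (hHerm : M₀.IsHermitian)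
    (κ : ℝ) (hκ : κ = (⨆ i, hHerm.eigenvalues i) / (⨅ i, hHerm.eigenvalues i)) :
    ∀ (μ : ℂ) (v : Fin n → ℂ), v ≠ 0 →
      ((D₀⁻¹ * A₀).map (fun x : ℝ => (x : ℂ))) *ᵥ v = μ • v →
      μ.im = 0 ∧ ‖μ‖ ≤ 1 - 1 / κ := by
  intro μ v hv hev
  obtain ⟨hPD, hoff, hdom⟩ := hSDDM
  rcases Nat.eq_zero_or_pos n with hn | hn
  · subst hn
    exact absurd (funext fun i => i.elim0) hv
  haveI : NeZero n := ⟨hn.ne'⟩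
  set lmin := ⨅ i, hHerm.eigenvalues i with hlmin
  set lmax := ⨆ i, hHerm.eigenvalues i with hlmax
  -- positivity of eigenvalues
  have hevpos : ∀ i, 0 < hHerm.eigenvalues i := fun i => hPD.eigenvalues_pos i
  have hminle : ∀ i, lmin ≤ hHerm.eigenvalues i := fun i => ciInf_le (Finite.bddBelow_range _) i
  have hmaxle : ∀ i, hHerm.eigenvalues i ≤ lmax := fun i => le_ciSup (Finite.bddAbove_range _) i
  have hminpos : 0 < lmin := by
    obtain ⟨i0, hi0⟩ := Finite.exists_min hHerm.eigenvalues
    exact lt_of_lt_of_le (hevpos i0) (le_ciInf hi0)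
  have hmaxpos : 0 < lmax := lt_of_lt_of_le (hevpos ⟨0, hn⟩) (hmaxle _)
  have hκinv : 1 / κ = lmin / lmax := by rw [hκ, one_div_div]
  -- diagonal entries positive
  have hdiagpos : ∀ i, 0 < M₀ i i := by
    intro i
    have h1 : (Pi.single i 1 : Fin n → ℝ) ≠ 0 := by
      intro h
      simpa using congrFun h i
    have := hPD.dotProduct_mulVec_pos h1
    simpa [dotProduct, Matrix.mulVec, Pi.single_apply, Finset.mul_sum] using this
  -- diagonal entries ≤ lmax
  have hMii_le : ∀ i, M₀ i i ≤ lmax := by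
    intro i
    have h := quad_upper hHerm (Pi.single i 1)
    simpa [dotProduct, Matrix.mulVec, Pi.single_apply, Finset.mul_sum] using h
  -- entries of A₀ nonneg and A₀ hermitian
  have hAnn : ∀ i j, 0 ≤ A₀ i j := by
    intro i j
    rcases eq_or_ne i j with rfl | hij
    · simp [hA, hD]
    · have := hoff i j hij
      simp [hA, hD, Matrix.diagonal_apply_ne _ hij]
      linarith
  have hA₀herm : A₀.IsHermitian := by
    rw [hA, hD]
    exact (Matrix.isHermitian_diagonal _).sub hHerm
  -- the real vector of absolute values
  set a : Fin n → ℝ := fun i => ‖v i‖ with ha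
  have hann : ∀ i, 0 ≤ a i := fun i => norm_nonneg _
  set r : ℝ := ∑ i, M₀ i i * (a i)^2 with hr
  have hrpos : 0 < r := by
    obtain ⟨i0, hi0⟩ := Function.ne_iff.mp hv
    refine Finset.sum_pos' (fun i _ => ?_) ⟨i0, Finset.mem_univ _, ?_⟩
    · exact mul_nonneg (hdiagpos i).le (sq_nonneg _)
    · exact mul_pos (hdiagpos i0) (pow_pos (norm_pos_iff.mpr hi0) 2)
  have hDform : a ⬝ᵥ (D₀ *ᵥ a) = r := by
    simp [hD, Matrix.mulVec_diagonal, dotProduct, hr, sq]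
    exact Finset.sum_congr rfl fun i _ => by ring
  have hr_le : r ≤ lmax * (a ⬝ᵥ a) := by
    rw [hr, dotProduct, Finset.mul_sum]
    refine Finset.sum_le_sum fun i _ => ?_
    have := hMii_le i
    have h2 : a i * a i = (a i)^2 := (sq (a i)).symm
    nlinarith [sq_nonneg (a i)]
  have key : a ⬝ᵥ (A₀ *ᵥ a) ≤ (1 - 1/κ) * r := by
    have h1 : a ⬝ᵥ (A₀ *ᵥ a) = r - a ⬝ᵥ (M₀ *ᵥ a) := by
      rw [hA, Matrix.sub_mulVec, dotProduct_sub, hDform]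
    have h2 : lmin * (a ⬝ᵥ a) ≤ a ⬝ᵥ (M₀ *ᵥ a) := quad_lower hHerm a
    have h3 : (lmin / lmax) * r ≤ lmin * (a ⬝ᵥ a) := by
      have := mul_le_mul_of_nonneg_left hr_le (div_nonneg hminpos.le hmaxpos.le)
      calc (lmin / lmax) * r ≤ (lmin / lmax) * (lmax * (a ⬝ᵥ a)) := this
        _ = lmin * (a ⬝ᵥ a) := by field_simp
    rw [hκinv, h1]
    nlinarith
  -- complex part
  have hdet : IsUnit D₀.det := by
    rw [hD, Matrix.det_diagonal]
    exact isUnit_iff_ne_zero.mpr (Finset.prod_ne_zero_iff.mpr fun i _ => (hdiagpos i).ne')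
  set c : ℝ →+* ℂ := Complex.ofRealHom with hc
  have hmap : ∀ (P Q : Matrix (Fin n) (Fin n) ℝ),
      (P * Q).map (fun x : ℝ => (x:ℂ)) = P.map (fun x : ℝ => (x:ℂ)) * Q.map (fun x : ℝ => (x:ℂ)) :=
    fun P Q => Matrix.map_mul (f := c)
  have heq : (A₀.map (fun x : ℝ => (x:ℂ))) *ᵥ v
      = μ • ((D₀.map (fun x : ℝ => (x:ℂ))) *ᵥ v) := by
    have h0 : D₀ * (D₀⁻¹ * A₀) = A₀ := by
      rw [← mul_assoc, Matrix.mul_nonsing_inv _ hdet, one_mul]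
    calc (A₀.map (fun x : ℝ => (x:ℂ))) *ᵥ v
        = ((D₀ * (D₀⁻¹ * A₀)).map (fun x : ℝ => (x:ℂ))) *ᵥ v := by rw [h0]
      _ = (D₀.map (fun x : ℝ => (x:ℂ))) *ᵥ (((D₀⁻¹ * A₀).map (fun x : ℝ => (x:ℂ))) *ᵥ v) := by
          rw [hmap, ← Matrix.mulVec_mulVec]
      _ = (D₀.map (fun x : ℝ => (x:ℂ))) *ᵥ (μ • v) := by rw [hev]
      _ = μ • ((D₀.map (fun x : ℝ => (x:ℂ))) *ᵥ v) := Matrix.mulVec_smul _ _ _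
  set s : ℂ := star v ⬝ᵥ ((A₀.map (fun x : ℝ => (x:ℂ))) *ᵥ v) with hs
  set d : ℂ := star v ⬝ᵥ ((D₀.map (fun x : ℝ => (x:ℂ))) *ᵥ v) with hd
  have hsd : s = μ * d := by
    rw [hs, heq, dotProduct_smul, smul_eq_mul, hd]
  have hdr : d = (r : ℂ) := by
    rw [hd, hD]
    have hdiagmap : (Matrix.diagonal fun i => M₀ i i).map (fun x : ℝ => (x:ℂ))
        = Matrix.diagonal (fun i => ((M₀ i i : ℝ) : ℂ)) := Matrix.diagonal_map (by simp)
    rw [hdiagmap]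
    simp only [dotProduct, Matrix.mulVec_diagonal, hr]
    push_cast
    refine Finset.sum_congr rfl fun i _ => ?_
    have : (starRingEnd ℂ) (v i) * v i = ((‖v i‖)^2 : ℝ) := by
      rw [mul_comm, Complex.mul_conj, Complex.sq_norm]
    calc star v i * ((M₀ i i : ℂ) * v i) = (M₀ i i : ℂ) * ((starRingEnd ℂ) (v i) * v i) := by
          simp only [Pi.star_apply, Complex.star_def]; ring
      _ = (M₀ i i : ℂ) * ((‖v i‖)^2 : ℝ) := by rw [this]
      _ = (M₀ i i : ℂ) * (a i : ℂ)^2 := by push_cast [ha]; ring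
  -- s is real
  have hBherm : (A₀.map (fun x : ℝ => (x:ℂ)))ᴴ = A₀.map (fun x : ℝ => (x:ℂ)) := by
    rw [← Matrix.conjTranspose_map (fun x : ℝ => (x:ℂ)) (fun x => by simp [Complex.conj_ofReal]),
      hA₀herm.eq]
  have hconj : (starRingEnd ℂ) s = s := by
    have h0 : s = star (star ((A₀.map (fun x : ℝ => (x:ℂ))) *ᵥ v) ⬝ᵥ v) := by
      rw [hs, star_dotProduct]
    calc (starRingEnd ℂ) s = star s := rfl
      _ = star ((A₀.map (fun x : ℝ => (x:ℂ))) *ᵥ v) ⬝ᵥ v := by rw [h0, star_star]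
      _ = (star v ᵥ* (A₀.map (fun x : ℝ => (x:ℂ)))ᴴ) ⬝ᵥ v := by rw [Matrix.star_mulVec]
      _ = star v ⬝ᵥ ((A₀.map (fun x : ℝ => (x:ℂ)))ᴴ *ᵥ v) := (Matrix.dotProduct_mulVec _ _ _).symm
      _ = s := by rw [hBherm, hs]
  -- |s| ≤ a ⬝ᵥ (A₀ *ᵥ a)
  have habs : ‖s‖ ≤ a ⬝ᵥ (A₀ *ᵥ a) := by
    rw [hs]
    calc ‖star v ⬝ᵥ ((A₀.map (fun x : ℝ => (x:ℂ))) *ᵥ v)‖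
        ≤ ∑ i, ‖star v i * ((A₀.map (fun x : ℝ => (x:ℂ))) *ᵥ v) i‖ :=
          norm_sum_le _ _
      _ ≤ ∑ i, a i * ∑ j, A₀ i j * a j := by
          refine Finset.sum_le_sum fun i _ => ?_
          rw [norm_mul]
          have h1 : ‖star v i‖ = a i := by
            simp [Pi.star_apply, ha]
          rw [h1]
          refine mul_le_mul_of_nonneg_left ?_ (hann i)
          calc ‖((A₀.map (fun x : ℝ => (x:ℂ))) *ᵥ v) i‖
              ≤ ∑ j, ‖(A₀ i j : ℂ) * v j‖ := by
                simp only [Matrix.mulVec, dotProduct, Matrix.map_apply]; exact norm_sum_le _ _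
            _ = ∑ j, A₀ i j * a j := by
                refine Finset.sum_congr rfl fun j _ => ?_
                rw [norm_mul, Complex.norm_real, Real.norm_eq_abs, abs_of_nonneg (hAnn i j), ha]
      _ = a ⬝ᵥ (A₀ *ᵥ a) := by
          simp [dotProduct, Matrix.mulVec]
  -- conclusion
  have hrC : (r : ℂ) ≠ 0 := Complex.ofReal_ne_zero.mpr hrpos.ne'
  have hμ : μ = s / (r : ℂ) := by
    rw [eq_div_iff hrC, ← hdr, hsd]
  constructor
  · have hsim : s.im = 0 := by
      have h1 := congrArg Complex.im hconj
      simp only [Complex.conj_im] at h1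
      linarith
    rw [hμ, Complex.div_im, hsim]
    simp
  · rw [hμ, norm_div, Complex.norm_real, Real.norm_eq_abs, abs_of_pos hrpos, div_le_iff₀ hrpos]
    calc ‖s‖ ≤ a ⬝ᵥ (A₀ *ᵥ a) := habs
      _ ≤ (1 - 1/κ) * r := key
end

section
/- Let M₀ = D₀ − A₀ be an SDDM matrix with its standard splitting, let κ = λ_max(M₀)/λ_min(M₀) be its condition number, and let d ≥ 0 be any integer. Then [1 − (1 − 1/κ)^(2^d)]·D₀ ⪯ D₀ − D₀·(D₀⁻¹A₀)^(2^d) ⪯ [1 + (1 − 1/κ)^(2^d)]·D₀ in the Loewner order. -/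
open Matrix

open Matrix

variable {n : ℕ}

lemma conj_pow' {U P : Matrix (Fin n) (Fin n) ℝ} (h1 : U * star U = 1) (h2 : star U * U = 1)
    (k : ℕ) : (U * P * star U) ^ k = U * P ^ k * star U := by
  induction k with
  | zero => simp [h1]
  | succ k ih =>
    rw [pow_succ, ih, pow_succ]
    calc U * P ^ k * star U * (U * P * star U)
        = U * P ^ k * (star U * U) * P * star U := by simp only [Matrix.mul_assoc]
      _ = U * (P ^ k * P) * star U := by rw [h2]; simp only [Matrix.mul_one, Matrix.mul_assoc]

lemma spectral_comb {Y : Matrix (Fin n) (Fin n) ℝ} (hY : Y.IsHermitian) (a b : ℝ) (k : ℕ) :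
    a • (1 : Matrix (Fin n) (Fin n) ℝ) + b • Y ^ k =
      (hY.eigenvectorUnitary : Matrix (Fin n) (Fin n) ℝ) *
        diagonal (fun i => a + b * hY.eigenvalues i ^ k) *
        star (hY.eigenvectorUnitary : Matrix (Fin n) (Fin n) ℝ) := by
  set U := (hY.eigenvectorUnitary : Matrix (Fin n) (Fin n) ℝ) with hU
  have h1 : U * star U = 1 := (Matrix.mem_unitaryGroup_iff).mp (hY.eigenvectorUnitary).2
  have h2 : star U * U = 1 := (Matrix.mem_unitaryGroup_iff').mp (hY.eigenvectorUnitary).2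
  have hYeq : Y = U * diagonal hY.eigenvalues * star U := by
    simpa using hY.spectral_theorem
  have hdiag : diagonal (fun i => a + b * hY.eigenvalues i ^ k) =
      a • (1 : Matrix (Fin n) (Fin n) ℝ) + b • (diagonal hY.eigenvalues) ^ k := by
    rw [diagonal_pow, ← diagonal_one, ← diagonal_smul, ← diagonal_smul, diagonal_add]
    funext i; simp [smul_eq_mul]
  rw [hdiag]
  rw [Matrix.mul_add, Matrix.add_mul, Matrix.mul_smul, Matrix.smul_mul, Matrix.mul_smul,
    Matrix.smul_mul, Matrix.mul_one, h1, ← conj_pow' h1 h2, ← hYeq]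

lemma psd_comb {Y : Matrix (Fin n) (Fin n) ℝ} (hY : Y.IsHermitian) (a b : ℝ) (k : ℕ)
    (h : ∀ i, 0 ≤ a + b * hY.eigenvalues i ^ k) :
    (a • (1 : Matrix (Fin n) (Fin n) ℝ) + b • Y ^ k).PosSemidef := by
  rw [spectral_comb hY a b k]
  have := (Matrix.PosSemidef.diagonal (d := fun i => a + b * hY.eigenvalues i ^ k) h
    ).mul_mul_conjTranspose_same (hY.eigenvectorUnitary : Matrix (Fin n) (Fin n) ℝ)
  rwa [Matrix.star_eq_conjTranspose]

lemma eig_bound {Y : Matrix (Fin n) (Fin n) ℝ} (hY : Y.IsHermitian) (a b : ℝ) (k : ℕ)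
    (h : (a • (1 : Matrix (Fin n) (Fin n) ℝ) + b • Y ^ k).PosSemidef) (i : Fin n) :
    0 ≤ a + b * hY.eigenvalues i ^ k := by
  rw [spectral_comb hY a b k] at h
  set U := (hY.eigenvectorUnitary : Matrix (Fin n) (Fin n) ℝ) with hU
  have h1 : U * star U = 1 := (Matrix.mem_unitaryGroup_iff).mp (hY.eigenvectorUnitary).2
  have h2 : star U * U = 1 := (Matrix.mem_unitaryGroup_iff').mp (hY.eigenvectorUnitary).2
  have h3 := h.conjTranspose_mul_mul_same (B := U)
  rw [← Matrix.star_eq_conjTranspose] at h3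
  have h4 : star U * (U * diagonal (fun i => a + b * hY.eigenvalues i ^ k) * star U) * U
      = diagonal (fun i => a + b * hY.eigenvalues i ^ k) := by
    calc star U * (U * diagonal (fun i => a + b * hY.eigenvalues i ^ k) * star U) * U
        = (star U * U) * diagonal (fun i => a + b * hY.eigenvalues i ^ k) * (star U * U) := by
          simp only [Matrix.mul_assoc]
      _ = _ := by rw [h2]; simp
  rw [h4] at h3
  exact (Matrix.posSemidef_diagonal_iff.mp h3) i

lemma psd_fin_zero (M : Matrix (Fin 0) (Fin 0) ℝ) : M.PosSemidef :=
  ⟨by ext i j; exact absurd i.2 (Nat.not_lt_zero _), fun x => by rw [Subsingleton.elim x 0]; simp⟩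


theorem stmt_14 {n : ℕ} (M₀ D₀ A₀ : Matrix (Fin n) (Fin n) ℝ)
    (hSDDM : IsSDDM M₀)
    (hD : D₀ = Matrix.diagonal (fun i => M₀ i i))
    (hA : A₀ = D₀ - M₀)
    (hHerm : M₀.IsHermitian)
    (κ : ℝ) (hκ : κ = (⨆ i, hHerm.eigenvalues i) / (⨅ i, hHerm.eigenvalues i))
    (d : ℕ) :
    LoewnerLE ((1 - (1 - 1 / κ) ^ (2 ^ d)) • D₀) (D₀ - D₀ * (D₀⁻¹ * A₀) ^ (2 ^ d)) ∧
    LoewnerLE (D₀ - D₀ * (D₀⁻¹ * A₀) ^ (2 ^ d)) ((1 + (1 - 1 / κ) ^ (2 ^ d)) • D₀) := by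
  obtain ⟨hPD, hOff, -⟩ := hSDDM
  rcases Nat.eq_zero_or_pos n with hn | hn
  · subst hn
    exact ⟨psd_fin_zero _, psd_fin_zero _⟩
  haveI hne : Nonempty (Fin n) := ⟨⟨0, hn⟩⟩
  set μ : Fin n → ℝ := hHerm.eigenvalues with hμdef
  set a : ℝ := ⨆ i, μ i with hadef
  set b : ℝ := ⨅ i, μ i with hbdef
  have hμpos : ∀ i, 0 < μ i := fun i => hPD.eigenvalues_pos i
  have hble : ∀ i, b ≤ μ i := fun i => ciInf_le (Set.Finite.bddBelow (Set.finite_range μ)) i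
  have hlea : ∀ i, μ i ≤ a := fun i => le_ciSup (Set.Finite.bddAbove (Set.finite_range μ)) i
  have hbpos : 0 < b := by
    obtain ⟨i0, hi0⟩ := Finite.exists_min μ
    exact lt_of_lt_of_le (hμpos i0) (le_ciInf hi0)
  have hapos : 0 < a := lt_of_lt_of_le hbpos ((hble (Classical.arbitrary _)).trans (hlea _))
  have hba : b ≤ a := (hble (Classical.arbitrary _)).trans (hlea _)
  have hinv : 1 / κ = b / a := by rw [hκ, one_div, inv_div]
  set lam : ℝ := 1 - 1 / κ with hlamdef
  have hlam_nonneg : 0 ≤ lam := by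
    rw [hlamdef, hinv]
    have : b / a ≤ 1 := (div_le_one hapos).mpr hba
    linarith
  set k : ℕ := 2 ^ d with hkdef
  set δ : Fin n → ℝ := fun i => M₀ i i with hδdef
  -- PSD bounds on M₀
  have PSD1 : (M₀ - b • 1).PosSemidef := by
    have h1 := psd_comb hHerm (-b) 1 1 (fun i => by
      have := hble i; simp only [pow_one, one_mul]; linarith)
    have e : (-b) • (1 : Matrix (Fin n) (Fin n) ℝ) + (1:ℝ) • M₀ ^ 1 = M₀ - b • 1 := by
      rw [pow_one, one_smul, neg_smul]; abel
    rwa [e] at h1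
  have PSD2 : (a • 1 - M₀).PosSemidef := by
    have h2 := psd_comb hHerm a (-1) 1 (fun i => by
      have := hlea i; simp only [pow_one]; linarith)
    have e : a • (1 : Matrix (Fin n) (Fin n) ℝ) + (-1:ℝ) • M₀ ^ 1 = a • 1 - M₀ := by
      rw [pow_one, neg_one_smul]; abel
    rwa [e] at h2
  have hδb : ∀ i, b ≤ δ i := by
    intro i
    have h := PSD1.dotProduct_mulVec_nonneg (Pi.single i 1)
    simpa [dotProduct, Matrix.mulVec, Pi.single_apply, Finset.sum_ite_eq,
      Matrix.sub_apply, Matrix.one_apply, sub_nonneg] using h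
  have hδa : ∀ i, δ i ≤ a := by
    intro i
    have h := PSD2.dotProduct_mulVec_nonneg (Pi.single i 1)
    simpa [dotProduct, Matrix.mulVec, Pi.single_apply, Finset.sum_ite_eq,
      Matrix.sub_apply, Matrix.one_apply, sub_nonneg] using h
  have hδpos : ∀ i, 0 < δ i := fun i => lt_of_lt_of_le hbpos (hδb i)
  -- square-root scaling matrices
  set s : Fin n → ℝ := fun i => Real.sqrt (δ i) with hsdef
  have hspos : ∀ i, 0 < s i := fun i => Real.sqrt_pos.mpr (hδpos i)
  set S : Matrix (Fin n) (Fin n) ℝ := diagonal s with hSdef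
  set T : Matrix (Fin n) (Fin n) ℝ := diagonal (fun i => (s i)⁻¹) with hTdef
  have hST : S * T = 1 := by
    rw [hSdef, hTdef, Matrix.diagonal_mul_diagonal, ← Matrix.diagonal_one]
    have e : (fun i => s i * (s i)⁻¹) = fun _ => (1:ℝ) :=
      funext fun i => mul_inv_cancel₀ (hspos i).ne'
    rw [e]
  have hTS : T * S = 1 := by
    rw [hSdef, hTdef, Matrix.diagonal_mul_diagonal, ← Matrix.diagonal_one]
    have e : (fun i => (s i)⁻¹ * s i) = fun _ => (1:ℝ) :=
      funext fun i => inv_mul_cancel₀ (hspos i).ne'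
    rw [e]
  have hSS : S * S = diagonal δ := by
    rw [hSdef, Matrix.diagonal_mul_diagonal]
    have e : (fun i => s i * s i) = δ := funext fun i => Real.mul_self_sqrt (hδpos i).le
    rw [e]
  have hTδT : T * diagonal δ * T = 1 := by
    rw [← hSS]
    have e : T * (S * S) * T = (T * S) * (S * T) := by simp only [Matrix.mul_assoc]
    rw [e, hTS, hST, Matrix.one_mul]
  have hDinv : (diagonal δ)⁻¹ = T * T := by
    apply Matrix.inv_eq_right_inv
    rw [hTdef, Matrix.diagonal_mul_diagonal, Matrix.diagonal_mul_diagonal, ← Matrix.diagonal_one]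
    have e : (fun i => δ i * ((s i)⁻¹ * (s i)⁻¹)) = fun _ => (1:ℝ) := by
      funext i
      rw [← mul_inv, Real.mul_self_sqrt (hδpos i).le]
      exact mul_inv_cancel₀ (hδpos i).ne'
    rw [e]
  -- symmetry facts
  have hMT : M₀ᵀ = M₀ := by rw [← Matrix.conjTranspose_eq_transpose_of_trivial]; exact hHerm
  have hAT : A₀ᵀ = A₀ := by
    rw [hA, hD, Matrix.transpose_sub, Matrix.diagonal_transpose, hMT]
  have hTh : Tᴴ = T := by
    rw [hTdef]; simp [Matrix.diagonal_conjTranspose]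
  have hSh : Sᴴ = S := by
    rw [hSdef]; simp [Matrix.diagonal_conjTranspose]
  set X : Matrix (Fin n) (Fin n) ℝ := T * A₀ * T with hXdef
  have hXherm : X.IsHermitian := by
    have : Xᴴ = X := by
      rw [hXdef, Matrix.conjTranspose_mul, Matrix.conjTranspose_mul, hTh]
      have hAh : A₀ᴴ = A₀ := by
        rw [Matrix.conjTranspose_eq_transpose_of_trivial, hAT]
      rw [hAh, Matrix.mul_assoc]
    exact this
  have hM₀eq : M₀ = diagonal δ - A₀ := by rw [hA, hD]; abel
  -- key PSD fact 1 : M₀ - (b/a) • diagonal δ is PSD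
  set c : ℝ := b / a with hcdef
  have hcpos : 0 < c := div_pos hbpos hapos
  have hdiag2 : (diagonal (fun i => b - c * δ i)).PosSemidef := by
    apply Matrix.PosSemidef.diagonal
    intro i
    have h1 : c * δ i ≤ c * a := mul_le_mul_of_nonneg_left (hδa i) hcpos.le
    have h2 : c * a = b := by rw [hcdef]; field_simp
    simp only [Pi.zero_apply]
    linarith
  have hsplit : ∀ (Q : Matrix (Fin n) (Fin n) ℝ),
      Q - c • diagonal δ = (Q - b • 1) + diagonal (fun i => b - c * δ i) := by
    intro Q
    have e1 : diagonal (fun i => b - c * δ i) = b • (1 : Matrix (Fin n) (Fin n) ℝ)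
        - c • diagonal δ := by
      rw [Matrix.smul_one_eq_diagonal, ← Matrix.diagonal_smul, ← Matrix.diagonal_sub]
      congr 1
    rw [e1]; abel
  have PSDkey1 : (M₀ - c • diagonal δ).PosSemidef := by
    rw [hsplit]
    exact PSD1.add hdiag2
  -- key PSD fact 2 : diagonal δ + A₀ - (b/a) • diagonal δ is PSD (via absolute-value trick)
  have PSDmid : (diagonal δ + A₀ - b • 1).PosSemidef := by
    refine Matrix.PosSemidef.of_dotProduct_mulVec_nonneg ?_ ?_
    · have h1 : (diagonal δ + A₀ - b • 1)ᴴ = diagonal δ + A₀ - b • 1 := by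
        rw [Matrix.conjTranspose_eq_transpose_of_trivial, Matrix.transpose_sub,
          Matrix.transpose_add, Matrix.transpose_smul, Matrix.transpose_one,
          Matrix.diagonal_transpose, hAT]
      exact h1
    · intro v
      have hsv : star v = v := by funext j; simp
      set w : Fin n → ℝ := fun j => |v j| with hwdef
      have hsw : star w = w := by funext j; simp
      have h1 : 0 ≤ w ⬝ᵥ ((M₀ - b • 1) *ᵥ w) := by
        have := PSD1.dotProduct_mulVec_nonneg w; rwa [hsw] at this
      have hA0diag : ∀ i, A₀ i i = 0 := by
        intro i
        rw [hA, hD]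
        simp [Matrix.sub_apply, hδdef]
      have h2 : w ⬝ᵥ (M₀ *ᵥ w) ≤ v ⬝ᵥ ((diagonal δ + A₀) *ᵥ v) := by
        simp only [dotProduct, Matrix.mulVec, Finset.mul_sum]
        apply Finset.sum_le_sum
        intro i _
        apply Finset.sum_le_sum
        intro j _
        by_cases hij : i = j
        · subst hij
          simp only [Matrix.add_apply, Matrix.diagonal_apply_eq, hA0diag i, add_zero, hwdef]
          have habs2 : |v i| * |v i| = v i * v i := abs_mul_abs_self (v i)
          apply le_of_eq
          calc |v i| * (M₀ i i * |v i|) = M₀ i i * (|v i| * |v i|) := by ring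
            _ = v i * (δ i * v i) := by rw [habs2, hδdef]; ring
        · have hAij : A₀ i j = -(M₀ i j) := by
            rw [hA, hD]; simp [Matrix.sub_apply, Matrix.diagonal_apply_ne _ hij]
          have hMij : M₀ i j ≤ 0 := hOff i j hij
          simp only [Matrix.add_apply, Matrix.diagonal_apply_ne _ hij, zero_add, hAij, hwdef]
          have habs : -(|v i| * |v j|) ≤ v i * v j := by
            have := neg_abs_le (v i * v j)
            rw [abs_mul] at this; linarith
          nlinarith [neg_nonneg.mpr hMij]
      have h3 : w ⬝ᵥ ((b • (1:Matrix (Fin n) (Fin n) ℝ)) *ᵥ w)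
          = v ⬝ᵥ ((b • (1:Matrix (Fin n) (Fin n) ℝ)) *ᵥ v) := by
        simp only [Matrix.smul_mulVec, Matrix.one_mulVec, dotProduct_smul, smul_eq_mul]
        congr 1
        simp only [dotProduct, hwdef]
        exact Finset.sum_congr rfl fun j _ => abs_mul_abs_self (v j)
      rw [hsv]
      rw [Matrix.sub_mulVec, dotProduct_sub] at h1 ⊢
      linarith
  have PSDkey2 : (diagonal δ + A₀ - c • diagonal δ).PosSemidef := by
    rw [hsplit]
    exact PSDmid.add hdiag2
  -- transfer to X
  have hconj : ∀ (P : Matrix (Fin n) (Fin n) ℝ), P.PosSemidef → (T * P * T).PosSemidef := by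
    intro P hP
    have := hP.mul_mul_conjTranspose_same T
    rwa [hTh] at this
  have hXm : (lam • (1 : Matrix (Fin n) (Fin n) ℝ) - X).PosSemidef := by
    have h := hconj _ PSDkey1
    have e : T * (M₀ - c • diagonal δ) * T = lam • 1 - X := by
      rw [hM₀eq]
      simp only [Matrix.mul_sub, Matrix.sub_mul, Matrix.mul_smul, Matrix.smul_mul]
      rw [hTδT, ← hXdef, hlamdef, hinv, sub_smul, one_smul]
      abel
    rwa [e] at h
  have hXp : (lam • (1 : Matrix (Fin n) (Fin n) ℝ) + X).PosSemidef := by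
    have h := hconj _ PSDkey2
    have e : T * (diagonal δ + A₀ - c • diagonal δ) * T = lam • 1 + X := by
      simp only [Matrix.mul_sub, Matrix.sub_mul, Matrix.mul_add, Matrix.add_mul,
        Matrix.mul_smul, Matrix.smul_mul]
      rw [hTδT, ← hXdef, hlamdef, hinv, sub_smul, one_smul]
      abel
    rwa [e] at h
  -- eigenvalue bounds for X
  set ν : Fin n → ℝ := hXherm.eigenvalues with hνdef
  have hν_le : ∀ i, ν i ≤ lam := by
    intro i
    have e : lam • (1 : Matrix (Fin n) (Fin n) ℝ) + (-1:ℝ) • X ^ 1 = lam • 1 - X := by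
      rw [pow_one, neg_one_smul]; abel
    have h := eig_bound hXherm lam (-1) 1 (by rwa [e]) i
    simp only [pow_one] at h; linarith
  have hν_ge : ∀ i, -lam ≤ ν i := by
    intro i
    have e : lam • (1 : Matrix (Fin n) (Fin n) ℝ) + (1:ℝ) • X ^ 1 = lam • 1 + X := by
      rw [pow_one, one_smul]
    have h := eig_bound hXherm lam 1 1 (by rwa [e]) i
    simp only [pow_one, one_mul] at h; linarith
  have hνabs : ∀ i, |ν i ^ k| ≤ lam ^ k := by
    intro i
    rw [abs_pow]
    exact pow_le_pow_left₀ (abs_nonneg _) (abs_le.mpr ⟨hν_ge i, hν_le i⟩) k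
  -- PSD of lam^k • 1 ± X^k
  have hcore_m : (lam ^ k • (1 : Matrix (Fin n) (Fin n) ℝ) - X ^ k).PosSemidef := by
    have h := psd_comb hXherm (lam ^ k) (-1) k (fun i => by
      have h1 := hνabs i
      have h2 := le_abs_self (ν i ^ k)
      linarith)
    have e : lam ^ k • (1 : Matrix (Fin n) (Fin n) ℝ) + (-1:ℝ) • X ^ k
        = lam ^ k • 1 - X ^ k := by rw [neg_one_smul]; abel
    rwa [e] at h
  have hcore_p : (lam ^ k • (1 : Matrix (Fin n) (Fin n) ℝ) + X ^ k).PosSemidef := by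
    have h := psd_comb hXherm (lam ^ k) 1 k (fun i => by
      have h1 := hνabs i
      have h2 := neg_abs_le (ν i ^ k)
      simp only [one_mul]
      linarith)
    rwa [one_smul] at h
  -- the matrix power identity
  have hSTZ : ∀ Z : Matrix (Fin n) (Fin n) ℝ, S * (T * Z) = Z := by
    intro Z; rw [← Matrix.mul_assoc, hST, Matrix.one_mul]
  have hTSZ : ∀ Z : Matrix (Fin n) (Fin n) ℝ, T * (S * Z) = Z := by
    intro Z; rw [← Matrix.mul_assoc, hTS, Matrix.one_mul]
  have hpow : ∀ m : ℕ, D₀ * (D₀⁻¹ * A₀) ^ m = S * X ^ m * S := by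
    intro m
    induction m with
    | zero => rw [pow_zero, pow_zero, Matrix.mul_one, Matrix.mul_one, hSS, hD]
    | succ m ih =>
      rw [pow_succ, pow_succ, ← Matrix.mul_assoc, ih, hD, hDinv]
      have hXS : X * S = T * A₀ := by rw [hXdef, Matrix.mul_assoc, hTS, Matrix.mul_one]
      calc S * X ^ m * S * (T * T * A₀)
          = S * (X ^ m * (S * (T * (T * A₀)))) := by simp only [Matrix.mul_assoc]
        _ = S * (X ^ m * (T * A₀)) := by rw [hSTZ]
        _ = S * (X ^ m * (X * S)) := by rw [hXS]
        _ = S * (X ^ m * X) * S := by simp only [Matrix.mul_assoc]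
  -- final assembly
  have hSconj : ∀ (P : Matrix (Fin n) (Fin n) ℝ), P.PosSemidef → (S * P * S).PosSemidef := by
    intro P hP
    have := hP.mul_mul_conjTranspose_same S
    rwa [hSh] at this
  constructor
  · show (D₀ - D₀ * (D₀⁻¹ * A₀) ^ k - (1 - lam ^ k) • D₀).PosSemidef
    have e : D₀ - D₀ * (D₀⁻¹ * A₀) ^ k - (1 - lam ^ k) • D₀
        = S * (lam ^ k • 1 - X ^ k) * S := by
      rw [hpow, Matrix.mul_sub, Matrix.sub_mul, Matrix.mul_smul, Matrix.smul_mul,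
        Matrix.mul_one, hSS, ← hD, sub_smul, one_smul]
      abel
    rw [e]
    exact hSconj _ hcore_m
  · show ((1 + lam ^ k) • D₀ - (D₀ - D₀ * (D₀⁻¹ * A₀) ^ k)).PosSemidef
    have e : (1 + lam ^ k) • D₀ - (D₀ - D₀ * (D₀⁻¹ * A₀) ^ k)
        = S * (lam ^ k • 1 + X ^ k) * S := by
      rw [hpow, Matrix.mul_add, Matrix.add_mul, Matrix.mul_smul, Matrix.smul_mul,
        Matrix.mul_one, hSS, ← hD, add_smul, one_smul]
      abel
    rw [e]
    exact hSconj _ hcore_p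
end

section
/- Let M₀ = D₀ − A₀ be an SDDM matrix with its standard splitting, let d ≥ 0 be an integer, and let ε ≥ 0 satisfy D₀ ≈_ε D₀ − D₀·(D₀⁻¹A₀)^(2^d). Define Z_d = D₀⁻¹ and, for i = d−1 down to 0, Z_i = (1/2)·[ D₀⁻¹ + (I + (D₀⁻¹A₀)^(2^i))·Z_{i+1}·(I + (A₀·D₀⁻¹)^(2^i)) ]. Then Z₀ ≈_ε M₀⁻¹. -/
open Matrix

section Aux

variable {n : ℕ}

lemma psd_smul {c : ℝ} (hc : 0 ≤ c) {M : Matrix (Fin n) (Fin n) ℝ} (hM : M.PosSemidef) :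
    (c • M).PosSemidef := by
  refine Matrix.PosSemidef.of_dotProduct_mulVec_nonneg ?_ (fun x => ?_)
  · unfold Matrix.IsHermitian
    rw [conjTranspose_smul, star_trivial, hM.1.eq]
  · rw [Matrix.smul_mulVec, dotProduct_smul]
    exact smul_nonneg hc (hM.dotProduct_mulVec_nonneg x)

lemma pd_smul {c : ℝ} (hc : 0 < c) {M : Matrix (Fin n) (Fin n) ℝ} (hM : M.PosDef) :
    (c • M).PosDef := by
  refine Matrix.PosDef.of_dotProduct_mulVec_pos ?_ (fun x hx => ?_)
  · unfold Matrix.IsHermitian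
    rw [conjTranspose_smul, star_trivial, hM.1.eq]
  · rw [Matrix.smul_mulVec, dotProduct_smul]
    exact smul_pos hc (hM.dotProduct_mulVec_pos hx)

lemma conj_pd {M C : Matrix (Fin n) (Fin n) ℝ} (hM : M.PosDef) (hC : IsUnit C) :
    (Cᵀ * M * C).PosDef := by
  refine Matrix.PosDef.of_dotProduct_mulVec_pos ?_ (fun x hx => ?_)
  · have := Matrix.isHermitian_conjTranspose_mul_mul C hM.1
    rwa [conjTranspose_eq_transpose_of_trivial] at this
  · have hinj := Matrix.mulVec_injective_iff_isUnit.mpr hC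
    have hx' : C *ᵥ x ≠ 0 := fun h => hx (hinj (h.trans (Matrix.mulVec_zero C).symm))
    have := hM.dotProduct_mulVec_pos hx'
    rw [← conjTranspose_eq_transpose_of_trivial C]
    simpa only [star_mulVec, dotProduct_mulVec, vecMul_vecMul] using this

lemma conj_psd {M : Matrix (Fin n) (Fin n) ℝ} (hM : M.PosSemidef)
    (B : Matrix (Fin n) (Fin n) ℝ) : (B * M * Bᵀ).PosSemidef := by
  have := hM.mul_mul_conjTranspose_same B
  rwa [conjTranspose_eq_transpose_of_trivial] at this

lemma conj_psd' {M : Matrix (Fin n) (Fin n) ℝ} (hM : M.PosSemidef)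
    (B : Matrix (Fin n) (Fin n) ℝ) : (Bᵀ * M * B).PosSemidef := by
  have := hM.conjTranspose_mul_mul_same B
  rwa [conjTranspose_eq_transpose_of_trivial] at this

lemma inv_anti {A B : Matrix (Fin n) (Fin n) ℝ} (hA : A.PosDef) (hB : B.PosDef)
    (h : (B - A).PosSemidef) : (A⁻¹ - B⁻¹).PosSemidef := by
  have hAd : IsUnit A.det := (Matrix.isUnit_iff_isUnit_det _).mp hA.isUnit
  have hBd : IsUnit B.det := (Matrix.isUnit_iff_isUnit_det _).mp hB.isUnit
  have hAsym : Aᵀ = A := by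
    rw [← conjTranspose_eq_transpose_of_trivial]; exact hA.1.eq
  have hAisym : (A⁻¹)ᵀ = A⁻¹ := by rw [Matrix.transpose_nonsing_inv, hAsym]
  have hBsym : Bᵀ = B := by
    rw [← conjTranspose_eq_transpose_of_trivial]; exact hB.1.eq
  have hBisym : (B⁻¹)ᵀ = B⁻¹ := by rw [Matrix.transpose_nonsing_inv, hBsym]
  have c1 : ∀ Y : Matrix (Fin n) (Fin n) ℝ, A⁻¹ * (A * Y) = Y :=
    fun Y => Matrix.nonsing_inv_mul_cancel_left _ _ hAd
  have c2 : ∀ Y : Matrix (Fin n) (Fin n) ℝ, A * (A⁻¹ * Y) = Y :=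
    fun Y => Matrix.mul_nonsing_inv_cancel_left _ _ hAd
  have c3 : ∀ Y : Matrix (Fin n) (Fin n) ℝ, B⁻¹ * (B * Y) = Y :=
    fun Y => Matrix.nonsing_inv_mul_cancel_left _ _ hBd
  have c4 : ∀ Y : Matrix (Fin n) (Fin n) ℝ, B * (B⁻¹ * Y) = Y :=
    fun Y => Matrix.mul_nonsing_inv_cancel_left _ _ hBd
  have key : A⁻¹ - B⁻¹ =
      (A⁻¹ - B⁻¹)ᵀ * A * (A⁻¹ - B⁻¹) + (B⁻¹)ᵀ * (B - A) * B⁻¹ := by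
    rw [transpose_sub, hAisym, hBisym]
    simp only [sub_mul, mul_sub, Matrix.mul_assoc, c1, c2, c3, c4,
      Matrix.nonsing_inv_mul _ hAd, Matrix.nonsing_inv_mul _ hBd,
      Matrix.mul_nonsing_inv _ hAd, Matrix.mul_nonsing_inv _ hBd,
      Matrix.mul_one, Matrix.one_mul]
    abel
  rw [key]
  exact (conj_psd' hA.posSemidef _).add (conj_psd' h _)

lemma inv_smul_mat {c : ℝ} (hc : c ≠ 0) {A : Matrix (Fin n) (Fin n) ℝ}
    (hA : IsUnit A.det) : (c • A)⁻¹ = c⁻¹ • A⁻¹ := by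
  apply Matrix.inv_eq_left_inv
  rw [smul_mul_assoc, mul_smul_comm, smul_smul, inv_mul_cancel₀ hc, one_smul,
    Matrix.nonsing_inv_mul _ hA]

lemma inv_approx {ε : ℝ} {P Q : Matrix (Fin n) (Fin n) ℝ} (hP : P.PosDef) (hQ : Q.PosDef)
    (h : ApproxA ε P Q) : ApproxA ε P⁻¹ Q⁻¹ := by
  have hPd : IsUnit P.det := (Matrix.isUnit_iff_isUnit_det _).mp hP.isUnit
  have hexp : ∀ t : ℝ, Real.exp t ≠ 0 := fun t => (Real.exp_pos t).ne'
  constructor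
  · have h2 := h.2
    unfold LoewnerLE at h2 ⊢
    have := inv_anti hQ (pd_smul (Real.exp_pos ε) hP) h2
    rwa [inv_smul_mat (hexp ε) hPd, ← Real.exp_neg] at this
  · have h1 := h.1
    unfold LoewnerLE at h1 ⊢
    have := inv_anti (pd_smul (Real.exp_pos (-ε)) hP) hQ h1
    rwa [inv_smul_mat (hexp (-ε)) hPd, ← Real.exp_neg, neg_neg] at this

lemma approx_step {ε : ℝ} (hε : 0 ≤ ε) {Dinv Zn Mn : Matrix (Fin n) (Fin n) ℝ}
    (B : Matrix (Fin n) (Fin n) ℝ) (hDinv : Dinv.PosSemidef) (h : ApproxA ε Zn Mn) :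
    ApproxA ε ((1 / 2 : ℝ) • (Dinv + B * Zn * Bᵀ)) ((1 / 2 : ℝ) • (Dinv + B * Mn * Bᵀ)) := by
  have he1 : Real.exp (-ε) ≤ 1 := by
    have := Real.exp_le_exp.mpr (show -ε ≤ 0 by linarith)
    rwa [Real.exp_zero] at this
  have he2 : 1 ≤ Real.exp ε := Real.one_le_exp hε
  constructor
  · unfold LoewnerLE
    have hid : (1 / 2 : ℝ) • (Dinv + B * Mn * Bᵀ) -
        Real.exp (-ε) • ((1 / 2 : ℝ) • (Dinv + B * Zn * Bᵀ)) =
        (1 / 2 : ℝ) • ((1 - Real.exp (-ε)) • Dinv + B * (Mn - Real.exp (-ε) • Zn) * Bᵀ) := by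
      simp only [mul_sub, sub_mul, mul_smul_comm, smul_mul_assoc]
      module
    rw [hid]
    exact psd_smul (by norm_num) ((psd_smul (by linarith) hDinv).add (conj_psd h.1 B))
  · unfold LoewnerLE
    have hid : Real.exp ε • ((1 / 2 : ℝ) • (Dinv + B * Zn * Bᵀ)) -
        (1 / 2 : ℝ) • (Dinv + B * Mn * Bᵀ) =
        (1 / 2 : ℝ) • ((Real.exp ε - 1) • Dinv + B * (Real.exp ε • Zn - Mn) * Bᵀ) := by
      simp only [mul_sub, sub_mul, mul_smul_comm, smul_mul_assoc]
      module
    rw [hid]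
    exact psd_smul (by norm_num) ((psd_smul (by linarith) hDinv).add (conj_psd h.2 B))

lemma inv_formula {D A : Matrix (Fin n) (Fin n) ℝ} (hDd : IsUnit D.det)
    (hMd : IsUnit (D - A * D⁻¹ * A).det) :
    (D - A)⁻¹ = (1 / 2 : ℝ) •
      (D⁻¹ + (1 + D⁻¹ * A) * (D - A * D⁻¹ * A)⁻¹ * (1 + A * D⁻¹)) := by
  have hED : D⁻¹ * D = 1 := Matrix.nonsing_inv_mul _ hDd
  have g2 : (1 + A * D⁻¹) * (D - A) = D - A * D⁻¹ * A := by
    rw [add_mul, one_mul, mul_sub, Matrix.mul_assoc A D⁻¹ D, hED, Matrix.mul_one]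
    abel
  apply Matrix.inv_eq_left_inv
  rw [smul_mul_assoc, add_mul,
    Matrix.mul_assoc ((1 + D⁻¹ * A) * (D - A * D⁻¹ * A)⁻¹) (1 + A * D⁻¹) (D - A), g2,
    Matrix.mul_assoc (1 + D⁻¹ * A) _ _, Matrix.nonsing_inv_mul _ hMd, Matrix.mul_one,
    mul_sub, hED]
  module

lemma pd_step {D A : Matrix (Fin n) (Fin n) ℝ} (hDd : IsUnit D.det)
    (hEsym : (D⁻¹)ᵀ = D⁻¹) (hAsym : Aᵀ = A)
    (hD : D.PosDef) (hm : (D - A).PosDef) (hp : (D + A).PosDef) :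
    (D - A * D⁻¹ * A).PosDef ∧ (D + A * D⁻¹ * A).PosDef := by
  have hED : D⁻¹ * D = 1 := Matrix.nonsing_inv_mul _ hDd
  have hAED : A * D⁻¹ * D = A := by rw [Matrix.mul_assoc, hED, Matrix.mul_one]
  have g1 : (1 - A * D⁻¹) * (D + A) = D - A * D⁻¹ * A := by
    rw [sub_mul, one_mul, mul_add, hAED]; abel
  have g2 : (1 + A * D⁻¹) * (D - A) = D - A * D⁻¹ * A := by
    rw [add_mul, one_mul, mul_sub, hAED]; abel
  have key : D - A * D⁻¹ * A = (1 / 2 : ℝ) •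
      ((1 - A * D⁻¹) * (D + A) * (1 - D⁻¹ * A) + (1 + A * D⁻¹) * (D - A) * (1 + D⁻¹ * A)) := by
    rw [g1, g2]
    simp only [mul_sub, mul_add, Matrix.mul_one]
    module
  have htm : (1 - D⁻¹ * A)ᵀ = 1 - A * D⁻¹ := by
    rw [transpose_sub, transpose_one, transpose_mul, hAsym, hEsym]
  have htp : (1 + D⁻¹ * A)ᵀ = 1 + A * D⁻¹ := by
    rw [transpose_add, transpose_one, transpose_mul, hAsym, hEsym]
  have hu1 : IsUnit (1 - D⁻¹ * A) := by
    have h1 : (1 : Matrix (Fin n) (Fin n) ℝ) - D⁻¹ * A = D⁻¹ * (D - A) := by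
      rw [mul_sub, hED]
    rw [h1]
    exact (Matrix.isUnit_nonsing_inv_iff.mpr hD.isUnit).mul hm.isUnit
  have hu2 : IsUnit (1 + D⁻¹ * A) := by
    have h1 : (1 : Matrix (Fin n) (Fin n) ℝ) + D⁻¹ * A = D⁻¹ * (D + A) := by
      rw [mul_add, hED]
    rw [h1]
    exact (Matrix.isUnit_nonsing_inv_iff.mpr hD.isUnit).mul hp.isUnit
  constructor
  · have p1 := conj_pd hp hu1; rw [htm] at p1
    have p2 := conj_pd hm hu2; rw [htp] at p2
    rw [key]
    exact pd_smul (by norm_num) (p1.add p2)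
  · have h1 := conj_psd hD.inv.posSemidef A
    rw [hAsym] at h1
    exact hD.add_posSemidef h1

end Aux

section Main

variable {n : ℕ}

lemma diag_pos {M : Matrix (Fin n) (Fin n) ℝ} (hM : M.PosDef) (i : Fin n) : 0 < M i i := by
  have hne : (Pi.single i (1 : ℝ) : Fin n → ℝ) ≠ 0 := by
    intro h
    have := congrFun h i
    simp at this
  have := hM.dotProduct_mulVec_pos hne
  simpa [dotProduct, mulVec, Pi.single_apply, mul_ite, ite_mul,
    Finset.sum_ite_eq, Finset.sum_ite_eq'] using this

lemma plus_pd (M₀ D₀ A₀ : Matrix (Fin n) (Fin n) ℝ) (hSDDM : IsSDDM M₀)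
    (hD : D₀ = Matrix.diagonal (fun i => M₀ i i)) (hA : A₀ = D₀ - M₀) :
    (D₀ + A₀).PosDef := by
  obtain ⟨hPD, hoff, _⟩ := hSDDM
  have hMt : M₀ᵀ = M₀ := by
    rw [← conjTranspose_eq_transpose_of_trivial]; exact hPD.1.eq
  refine Matrix.PosDef.of_dotProduct_mulVec_pos ?_ (fun x hx => ?_)
  · unfold Matrix.IsHermitian
    rw [conjTranspose_eq_transpose_of_trivial, transpose_add, hA, transpose_sub, hD,
      diagonal_transpose, hMt]
  · set y : Fin n → ℝ := fun i => |x i| with hy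
    have hyne : y ≠ 0 := by
      intro h
      exact hx (funext fun i => abs_eq_zero.mp (congrFun h i))
    have hsy : star y = y := funext fun i => star_trivial _
    have hsx : star x = x := funext fun i => star_trivial _
    have hpos := hPD.dotProduct_mulVec_pos hyne
    rw [hsy] at hpos
    rw [hsx]
    refine lt_of_lt_of_le hpos ?_
    simp only [dotProduct, mulVec, Finset.mul_sum]
    refine Finset.sum_le_sum fun i _ => Finset.sum_le_sum fun j _ => ?_
    by_cases hij : i = j
    · subst hij
      have hDAii : (D₀ + A₀) i i = M₀ i i := by
        simp [hD, hA, Matrix.add_apply, Matrix.sub_apply, Matrix.diagonal_apply_eq]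
      rw [hDAii]
      apply le_of_eq
      calc y i * (M₀ i i * y i) = M₀ i i * (y i * y i) := by ring
        _ = M₀ i i * (x i * x i) := by rw [hy]; simp [abs_mul_abs_self]
        _ = x i * (M₀ i i * x i) := by ring
    · have hDij : D₀ i j = 0 := by rw [hD]; exact Matrix.diagonal_apply_ne _ hij
      have hAij : A₀ i j = -M₀ i j := by rw [hA]; simp [Matrix.sub_apply, hDij]
      have hAnn : 0 ≤ A₀ i j := by rw [hAij]; linarith [hoff i j hij]
      have hDAij : (D₀ + A₀) i j = A₀ i j := by simp [Matrix.add_apply, hDij]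
      have hMij : M₀ i j = -A₀ i j := by rw [hAij]; ring
      rw [hDAij, hMij, hy]
      calc |x i| * (-A₀ i j * |x j|) = -(A₀ i j * |x i * x j|) := by rw [abs_mul]; ring
        _ ≤ A₀ i j * (x i * x j) := by
            nlinarith [mul_le_mul_of_nonneg_left (neg_abs_le (x i * x j)) hAnn]
        _ = x i * (A₀ i j * x j) := by ring

end Main

theorem stmt_19 {n : ℕ} (M₀ D₀ A₀ : Matrix (Fin n) (Fin n) ℝ)
    (hSDDM : IsSDDM M₀)
    (hD : D₀ = Matrix.diagonal (fun i => M₀ i i))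
    (hA : A₀ = D₀ - M₀)
    (d : ℕ) (ε : ℝ) (hε : 0 ≤ ε)
    (happrox : ApproxA ε D₀ (D₀ - D₀ * (D₀⁻¹ * A₀) ^ (2 ^ d)))
    (Z : ℕ → Matrix (Fin n) (Fin n) ℝ)
    (hZd : Z d = D₀⁻¹)
    (hZ : ∀ i < d, Z i = (1 / 2 : ℝ) •
      (D₀⁻¹ + (1 + (D₀⁻¹ * A₀) ^ (2 ^ i)) * Z (i + 1) * (1 + (A₀ * D₀⁻¹) ^ (2 ^ i)))) :
    ApproxA ε (Z 0) M₀⁻¹ := by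
  have hdiag : ∀ i, 0 < M₀ i i := diag_pos hSDDM.1
  have hDpd : D₀.PosDef := by rw [hD]; exact Matrix.PosDef.diagonal hdiag
  have hDdet : IsUnit D₀.det := (Matrix.isUnit_iff_isUnit_det _).mp hDpd.isUnit
  have hDsym : D₀ᵀ = D₀ := by rw [hD, diagonal_transpose]
  have hEsym : (D₀⁻¹)ᵀ = D₀⁻¹ := by rw [Matrix.transpose_nonsing_inv, hDsym]
  have hMt : M₀ᵀ = M₀ := by
    rw [← conjTranspose_eq_transpose_of_trivial]; exact hSDDM.1.1.eq
  have hAsym : A₀ᵀ = A₀ := by rw [hA, transpose_sub, hDsym, hMt]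
  have hXt : ∀ k : ℕ, ((D₀⁻¹ * A₀) ^ k)ᵀ = (A₀ * D₀⁻¹) ^ k := by
    intro k; rw [transpose_pow, transpose_mul, hAsym, hEsym]
  have hDE : D₀ * D₀⁻¹ = 1 := Matrix.mul_nonsing_inv _ hDdet
  have hED : D₀⁻¹ * D₀ = 1 := Matrix.nonsing_inv_mul _ hDdet
  have hDXE : ∀ k : ℕ, D₀ * (D₀⁻¹ * A₀) ^ k * D₀⁻¹ = (A₀ * D₀⁻¹) ^ k := by
    intro k; induction k with
    | zero => simp [hDE]
    | succ k ih =>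
      calc D₀ * (D₀⁻¹ * A₀) ^ (k + 1) * D₀⁻¹
          = (D₀ * (D₀⁻¹ * A₀) ^ k * D₀⁻¹) * (A₀ * D₀⁻¹) := by
            rw [pow_succ]; simp only [← Matrix.mul_assoc]
        _ = (A₀ * D₀⁻¹) ^ k * (A₀ * D₀⁻¹) := by rw [ih]
        _ = (A₀ * D₀⁻¹) ^ (k + 1) := (pow_succ _ _).symm
  have hErec : ∀ k : ℕ, D₀⁻¹ * (D₀ * (D₀⁻¹ * A₀) ^ k) = (D₀⁻¹ * A₀) ^ k :=
    fun k => Matrix.nonsing_inv_mul_cancel_left _ _ hDdet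
  have hAsymk : ∀ k : ℕ, (D₀ * (D₀⁻¹ * A₀) ^ k)ᵀ = D₀ * (D₀⁻¹ * A₀) ^ k := by
    intro k
    rw [transpose_mul, hXt, hDsym, ← hDXE k,
      Matrix.mul_assoc (D₀ * (D₀⁻¹ * A₀) ^ k) D₀⁻¹ D₀, hED, Matrix.mul_one]
  have hrec : ∀ j : ℕ, D₀ * (D₀⁻¹ * A₀) ^ (2 ^ j) * D₀⁻¹ * (D₀ * (D₀⁻¹ * A₀) ^ (2 ^ j))
      = D₀ * (D₀⁻¹ * A₀) ^ (2 ^ (j + 1)) := by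
    intro j
    rw [Matrix.mul_assoc (D₀ * (D₀⁻¹ * A₀) ^ (2 ^ j)) D₀⁻¹ _, hErec,
      Matrix.mul_assoc, ← pow_add]
    congr 1
    ring
  have hPDj : ∀ j : ℕ, (D₀ - D₀ * (D₀⁻¹ * A₀) ^ (2 ^ j)).PosDef ∧
      (D₀ + D₀ * (D₀⁻¹ * A₀) ^ (2 ^ j)).PosDef := by
    intro j; induction j with
    | zero =>
      have h1 : D₀ * (D₀⁻¹ * A₀) ^ (2 ^ 0 : ℕ) = A₀ := by
        rw [pow_zero, pow_one, Matrix.mul_nonsing_inv_cancel_left _ _ hDdet]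
      constructor
      · rw [h1, hA, sub_sub_cancel]; exact hSDDM.1
      · rw [h1]; exact plus_pd M₀ D₀ A₀ hSDDM hD hA
    | succ j ih =>
      have h2 := pd_step hDdet hEsym (hAsymk (2 ^ j)) hDpd ih.1 ih.2
      rw [hrec j] at h2
      exact h2
  have hNdet : ∀ j : ℕ, IsUnit (D₀ - D₀ * (D₀⁻¹ * A₀) ^ (2 ^ j)).det :=
    fun j => (Matrix.isUnit_iff_isUnit_det _).mp (hPDj j).1.isUnit
  have main : ∀ k j : ℕ, j + k = d →
      ApproxA ε (Z j) ((D₀ - D₀ * (D₀⁻¹ * A₀) ^ (2 ^ j))⁻¹) := by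
    intro k
    induction k with
    | zero =>
      intro j hj
      have hjd : j = d := by omega
      subst hjd
      rw [hZd]
      exact inv_approx hDpd (hPDj j).1 happrox
    | succ k ih =>
      intro j hj
      have hjd : j < d := by omega
      have ihj := ih (j + 1) (by omega)
      have hBt : (1 + (D₀⁻¹ * A₀) ^ (2 ^ j))ᵀ = 1 + (A₀ * D₀⁻¹) ^ (2 ^ j) := by
        rw [transpose_add, transpose_one, hXt]
      have hMd' : IsUnit (D₀ - D₀ * (D₀⁻¹ * A₀) ^ (2 ^ j) * D₀⁻¹ *
          (D₀ * (D₀⁻¹ * A₀) ^ (2 ^ j))).det := by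
        rw [hrec j]; exact hNdet (j + 1)
      have hinv := inv_formula (A := D₀ * (D₀⁻¹ * A₀) ^ (2 ^ j)) hDdet hMd'
      rw [hrec j, hErec, hDXE, ← hBt] at hinv
      have hz' := hZ j hjd
      rw [← hBt] at hz'
      rw [hz', hinv]
      exact approx_step hε _ hDpd.inv.posSemidef ihj
  have h0 := main d 0 (by omega)
  have hN0 : D₀ - D₀ * (D₀⁻¹ * A₀) ^ (2 ^ 0 : ℕ) = M₀ := by
    rw [pow_zero, pow_one, Matrix.mul_nonsing_inv_cancel_left _ _ hDdet, hA, sub_sub_cancel]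
  rw [hN0] at h0
  exact h0
end
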